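/- arXiv:1701.03614 — 12 statements merged into one kernel-verified Lean document; each statement's English description precedes it below -/
import Mathlib

section
/- Let L ∈ ℝ^{n×n} satisfy L_{ij} ≤ 0 for all i ≠ j and Σ_j L_{ij} ≥ 0 for every i (i.e., −L is a compartmental matrix). Then for every y ∈ ℝⁿ, yᵀ L sgn(y) ≥ 0, where sgn(y) ∈ {−1,0,1}ⁿ is the entrywise sign vector of y (with sgn(0) = 0). -/
/-!
Since `y j * sgn (y j) = |y j|` and `|sgn (y j)| ≤ 1`, each term `y i * L i j * sgn (y j)` is at
least `|y i| * L i j`: with equality on the diagonal, and off the diagonal because `L i j ≤ 0`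
reverses `y i * sgn (y j) ≤ |y i|`. Summing, the form is at least `∑ i, |y i| * ∑ j, L i j ≥ 0`.
The argument only uses these two properties of `sgn y`, i.e. that it is a subgradient of the
`ℓ¹` norm at `y`.
-/

namespace Real

theorem mul_sign_self (x : ℝ) : x * sign x = |x| := by
  rcases lt_trichotomy x 0 with h | rfl | h
  · rw [sign_of_neg h, abs_of_neg h, mul_neg_one]
  · simp
  · rw [sign_of_pos h, abs_of_pos h, mul_one]

theorem abs_sign_le_one (x : ℝ) : |sign x| ≤ 1 := by
  rcases sign_apply_eq x with h | h | h <;> simp [h]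

end Real

section Compartmental

variable {R ι : Type*} [CommRing R] [LinearOrder R] [IsStrictOrderedRing R] [Fintype ι]

theorem abs_mul_le_mul_mul_of_nonpos {a l s : R} (hl : l ≤ 0) (hs : |s| ≤ 1) :
    |a| * l ≤ a * l * s := by
  have has : a * s ≤ |a| :=
    calc a * s ≤ |a * s| := le_abs_self _
      _ = |a| * |s| := abs_mul a s
      _ ≤ |a| := mul_le_of_le_one_right (abs_nonneg a) hs
  calc |a| * l ≤ a * s * l := mul_le_mul_of_nonpos_right has hl
    _ = a * l * s := by ring

theorem sum_abs_mul_rowSum_le_of_offDiag_nonpos (L : Matrix ι ι R)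
    (hoff : ∀ i j, i ≠ j → L i j ≤ 0) {y s : ι → R}
    (hys : ∀ i, y i * s i = |y i|) (hs : ∀ i, |s i| ≤ 1) :
    ∑ i, |y i| * ∑ j, L i j ≤ ∑ i, ∑ j, y i * L i j * s j := by
  simp only [Finset.mul_sum]
  refine Finset.sum_le_sum fun i _ => Finset.sum_le_sum fun j _ => ?_
  rcases eq_or_ne i j with rfl | hij
  · rw [mul_right_comm, hys, mul_comm]
  · exact abs_mul_le_mul_mul_of_nonpos (hoff i j hij) (hs j)

theorem sum_mul_mul_nonneg_of_compartmental (L : Matrix ι ι R)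
    (hoff : ∀ i j, i ≠ j → L i j ≤ 0) (hrow : ∀ i, 0 ≤ ∑ j, L i j) {y s : ι → R}
    (hys : ∀ i, y i * s i = |y i|) (hs : ∀ i, |s i| ≤ 1) :
    0 ≤ ∑ i, ∑ j, y i * L i j * s j := by
  calc 0 ≤ ∑ i, |y i| * ∑ j, L i j :=
        Finset.sum_nonneg fun i _ => mul_nonneg (abs_nonneg _) (hrow i)
    _ ≤ _ := sum_abs_mul_rowSum_le_of_offDiag_nonpos L hoff hys hs

end Compartmental

/-- If `-L` is a compartmental matrix (off-diagonal entries of `L` nonpositive,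
row sums of `L` nonnegative), then `yᵀ L sgn(y) ≥ 0` for every `y`. -/
theorem compartmental_sign_quadratic_nonneg {n : ℕ} (L : Matrix (Fin n) (Fin n) ℝ)
    (hoff : ∀ i j, i ≠ j → L i j ≤ 0)
    (hrow : ∀ i, 0 ≤ ∑ j, L i j)
    (y : Fin n → ℝ) :
    0 ≤ ∑ i, ∑ j, y i * L i j * Real.sign (y j) :=
  sum_mul_mul_nonneg_of_compartmental L hoff hrow (fun i => Real.mul_sign_self (y i))
    fun i => Real.abs_sign_le_one (y i)
end

section
/- Let L ∈ ℝ^{n×n} satisfy L_{ij} ≤ 0 for all i ≠ j and Σ_j L_{ij} ≥ 0 for every i (i.e., −L is a compartmental matrix), and let u : [0,∞) → ℝⁿ be any function. If x, x̃ : [0,∞) → ℝⁿ are differentiable and satisfy ẋ(t) = u(t) − Lᵀ x(t) and ẋ̃(t) = u(t) − Lᵀ x̃(t) for all t ≥ 0, then the l1-distance t ↦ Σ_{i=1}^n |x_i(t) − x̃_i(t)| is non-increasing on [0,∞). -/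
/-!
The difference `z = x - y` of two solutions solves the homogeneous system `ż = (-L)ᵀ z`, so
`z t = (exp ((t - s) • -L))ᵀ z s` for `s ≤ t`. As `-L` is Metzler, `exp (τ • -L)` is entrywise
nonnegative, and as its rows sum to at most `0`, the row sums of `exp (τ • -L)` decrease from `1`
in `τ`. A nonnegative matrix whose columns sum to at most `1` does not increase the `ℓ¹` norm.
-/

open Matrix NormedSpace Set

attribute [local instance] Matrix.linftyOpNormedRing Matrix.linftyOpNormedAlgebra

namespace Matrix

variable {ι : Type*} [Fintype ι]

theorem sum_abs_mulVec_le {M : Matrix ι ι ℝ} (hM : ∀ i j, 0 ≤ M i j)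
    (hcol : ∀ j, ∑ i, M i j ≤ 1) (v : ι → ℝ) : ∑ i, |(M *ᵥ v) i| ≤ ∑ j, |v j| := by
  have habs : ∀ i, |(M *ᵥ v) i| ≤ ∑ j, M i j * |v j| := fun i => by
    simpa only [mulVec, dotProduct, abs_mul, abs_of_nonneg (hM i _)] using
      Finset.abs_sum_le_sum_abs (fun j => M i j * v j) Finset.univ
  calc ∑ i, |(M *ᵥ v) i| ≤ ∑ i, ∑ j, M i j * |v j| := Finset.sum_le_sum fun i _ => habs i
    _ = ∑ j, (∑ i, M i j) * |v j| := by simp only [Finset.sum_mul]; exact Finset.sum_comm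
    _ ≤ ∑ j, |v j| := Finset.sum_le_sum fun j _ => mul_le_of_le_one_left (abs_nonneg _) (hcol j)

variable [DecidableEq ι]

theorem exp_apply_nonneg_of_nonneg {M : Matrix ι ι ℝ} (hM : ∀ i j, 0 ≤ M i j) (i j : ι) :
    0 ≤ exp M i j :=
  (Pi.hasSum.1 (Pi.hasSum.1 (exp_series_hasSum_exp' (𝕂 := ℝ) M) i) j).nonneg fun k =>
    mul_nonneg (inv_nonneg.2 k.factorial.cast_nonneg) (pow_apply_nonneg hM k i j)

/- Adding a large enough scalar `c` makes `M` nonnegative and only rescales `exp` by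
`Real.exp c`. -/
theorem exp_apply_nonneg_of_offDiag_nonneg {M : Matrix ι ι ℝ} (hM : ∀ i j, i ≠ j → 0 ≤ M i j)
    (i j : ι) : 0 ≤ exp M i j := by
  set c := ∑ k, |M k k|
  have hshift : ∀ i j, 0 ≤ (M + algebraMap ℝ _ c) i j := by
    intro i j
    rcases eq_or_ne i j with rfl | hij
    · have : |M i i| ≤ c :=
        Finset.single_le_sum (fun k _ => abs_nonneg (M k k)) (Finset.mem_univ i)
      rw [add_apply, algebraMap_matrix_apply, if_pos rfl, Algebra.algebraMap_self_apply]
      linarith [neg_abs_le (M i i)]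
    · rw [add_apply, algebraMap_matrix_apply, if_neg hij, add_zero]
      exact hM i j hij
  have hexp : exp M = Real.exp (-c) • exp (M + algebraMap ℝ _ c) := calc
    exp M = exp (M + algebraMap ℝ _ c + algebraMap ℝ _ (-c)) := by
      rw [map_neg, add_neg_cancel_right]
    _ = exp (M + algebraMap ℝ _ c) * algebraMap ℝ _ (exp (-c)) := by
      rw [exp_add_of_commute _ _ (Algebra.commute_algebraMap_right _ _), algebraMap_exp_comm]
      rfl
    _ = Real.exp (-c) • exp (M + algebraMap ℝ _ c) := by
      rw [← Algebra.commutes, ← Algebra.smul_def, Real.exp_eq_exp_ℝ]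
  rw [hexp, smul_apply, smul_eq_mul]
  exact mul_nonneg (Real.exp_nonneg _) (exp_apply_nonneg_of_nonneg hshift i j)

theorem hasDerivAt_exp_smul_apply (A : Matrix ι ι ℝ) (t : ℝ) (i j : ι) :
    HasDerivAt (fun t : ℝ => exp (t • A) i j) ((exp (t • A) * A) i j) t :=
  hasDerivAt_pi.1 (hasDerivAt_pi.1 (hasDerivAt_exp_smul_const A t) i) j

theorem sum_exp_smul_apply_le_one {B : Matrix ι ι ℝ} (hoff : ∀ i j, i ≠ j → 0 ≤ B i j)
    (hrow : ∀ i, ∑ j, B i j ≤ 0) {τ : ℝ} (hτ : 0 ≤ τ) (i : ι) : ∑ j, exp (τ • B) i j ≤ 1 := by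
  have hderiv : ∀ t, HasDerivAt (fun t : ℝ => ∑ j, exp (t • B) i j)
      (∑ l, exp (t • B) i l * ∑ j, B l j) t := fun t => by
    refine (HasDerivAt.fun_sum fun j _ => hasDerivAt_exp_smul_apply B t i j).congr_deriv ?_
    simp only [mul_apply, Finset.mul_sum]
    exact Finset.sum_comm
  have hanti : AntitoneOn (fun t : ℝ => ∑ j, exp (t • B) i j) (Ici 0) := by
    refine antitoneOn_of_hasDerivWithinAt_nonpos (convex_Ici 0)
      (fun t _ => (hderiv t).continuousAt.continuousWithinAt)
      (fun t _ => (hderiv t).hasDerivWithinAt)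
      fun t ht => Finset.sum_nonpos fun l _ => mul_nonpos_of_nonneg_of_nonpos ?_ (hrow l)
    rw [interior_Ici] at ht
    exact exp_apply_nonneg_of_offDiag_nonneg (fun a b hab => mul_nonneg ht.le (hoff a b hab)) i l
  calc ∑ j, exp (τ • B) i j ≤ ∑ j, exp ((0 : ℝ) • B) i j := hanti self_mem_Ici hτ hτ
    _ = 1 := by simp [one_apply]

theorem hasDerivAt_exp_smul_sub_mulVec (A : Matrix ι ι ℝ) (s : ℝ) (v : ι → ℝ) (t : ℝ) :
    HasDerivAt (fun t => exp ((t - s) • A) *ᵥ v) (A *ᵥ (exp ((t - s) • A) *ᵥ v)) t := by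
  rw [mulVec_mulVec, ((Commute.refl A).smul_right (t - s)).exp_right.eq]
  refine hasDerivAt_pi.2 fun i => ?_
  simp only [mulVec, dotProduct]
  exact HasDerivAt.fun_sum fun j _ =>
    ((hasDerivAt_exp_smul_apply A (t - s) i j).comp_sub_const t s).mul_const (v j)

theorem eqOn_exp_smul_sub_mulVec {A : Matrix ι ι ℝ} {z : ℝ → ι → ℝ} {s : ℝ}
    (hz : ∀ t ≥ s, HasDerivAt z (A *ᵥ z t) t) :
    EqOn z (fun t => exp ((t - s) • A) *ᵥ z s) (Ici s) := by
  intro t ht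
  have hlip : LipschitzWith ‖(toLin' A).toContinuousLinearMap‖₊ (A *ᵥ ·) :=
    (toLin' A).toContinuousLinearMap.lipschitz
  refine ODE_solution_unique (v := fun _ => (A *ᵥ ·)) (fun _ => hlip)
    (fun r hr => (hz r hr.1).continuousAt.continuousWithinAt)
    (fun r hr => (hz r hr.1).hasDerivWithinAt)
    (fun r _ => (hasDerivAt_exp_smul_sub_mulVec A s _ r).continuousAt.continuousWithinAt)
    (fun r _ => (hasDerivAt_exp_smul_sub_mulVec A s _ r).hasDerivWithinAt) ?_ ⟨ht, le_rfl⟩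
  simp

end Matrix

/-- If `-L` is a compartmental matrix, then the `l1`-distance between any two
solutions of the affine dynamical flow network `ẋ = u(t) − Lᵀ x` is non-increasing on `[0,∞)`. -/
theorem affine_flow_network_l1_nonexpansive {n : ℕ} (L : Matrix (Fin n) (Fin n) ℝ)
    (hoff : ∀ i j, i ≠ j → L i j ≤ 0)
    (hrow : ∀ i, 0 ≤ ∑ j, L i j)
    (u x y : ℝ → Fin n → ℝ)
    (hx : ∀ t ≥ (0 : ℝ), HasDerivAt x (u t - Lᵀ.mulVec (x t)) t)
    (hy : ∀ t ≥ (0 : ℝ), HasDerivAt y (u t - Lᵀ.mulVec (y t)) t) :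
    AntitoneOn (fun t => ∑ i, |x t i - y t i|) (Set.Ici 0) := by
  intro s hs t _ hst
  have hz : ∀ r ≥ s, HasDerivAt (x - y) ((-L)ᵀ *ᵥ (x - y) r) r := fun r hr => by
    refine ((hx r (hs.trans hr)).sub (hy r (hs.trans hr))).congr_deriv ?_
    simp only [Pi.sub_apply, transpose_neg, neg_mulVec, mulVec_sub]
    abel
  have hsol : (x - y) t = (exp ((t - s) • -L))ᵀ *ᵥ (x - y) s := by
    rw [← exp_transpose, transpose_smul]
    exact eqOn_exp_smul_sub_mulVec hz (mem_Ici.2 hst)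
  have hoff' : ∀ i j, i ≠ j → 0 ≤ (-L) i j := fun i j hij => neg_nonneg.2 (hoff i j hij)
  have hτ : 0 ≤ t - s := sub_nonneg.2 hst
  show ∑ i, |(x - y) t i| ≤ ∑ i, |(x - y) s i|
  rw [hsol]
  exact sum_abs_mulVec_le
    (fun i j => exp_apply_nonneg_of_offDiag_nonneg (fun a b h => smul_nonneg hτ (hoff' a b h)) j i)
    (sum_exp_smul_apply_le_one hoff' (fun i => by simpa using hrow i) hτ) _
end

section
/- Let L ∈ ℝ^{n×n} satisfy L_{ij} ≤ 0 for all i ≠ j and Σ_j L_{ij} ≥ 0 for every i (i.e., −L is a compartmental matrix). Consider the digraph on nodes {1,…,n} with an edge (i,j) whenever i ≠ j and L_{ij} < 0, and let S = {i : Σ_j L_{ij} > 0}. If every node i either belongs to S or has a directed path to some node of S (i.e., −L is outflow-connected), then every complex eigenvalue of −L has strictly negative real part (−L is Hurwitz). -/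
open Matrix

/-!
If `-L v = μ v` with `0 ≤ Re μ`, taking norms in row `i` of `(μ + Lᵢᵢ) vᵢ = -∑_{j ≠ i} Lᵢⱼ vⱼ`
gives `L |v| ≤ 0` componentwise, where `|v| = (‖vᵢ‖)ᵢ`. At an index where `|v|` is maximal,
`(L |v|)ᵢ = (∑ⱼ Lᵢⱼ) |vᵢ| + ∑ⱼ (-Lᵢⱼ) (|vᵢ| - |vⱼ|)` is a sum of nonnegative terms, so both vanish:
the maximum propagates along the edges of the digraph, and at a row with positive sum it must be
`0`, i.e. `v = 0`.
-/

section Compartmental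

variable {ι : Type*} [Fintype ι] {L : Matrix ι ι ℝ}

theorem mulVec_norm_nonpos_of_eigenvector_neg (hoff : ∀ i j, i ≠ j → L i j ≤ 0) {μ : ℂ}
    (hμ : 0 ≤ μ.re) {v : ι → ℂ} (heig : ((-L).map Complex.ofReal) *ᵥ v = μ • v) :
    L *ᵥ (‖v ·‖) ≤ 0 := by
  classical
  intro i
  have hLij : ∀ j ∈ Finset.univ.erase i, 0 ≤ -L i j := fun j hj =>
    neg_nonneg.mpr (hoff i j (Finset.ne_of_mem_erase hj).symm)
  have hrow_i : (μ + L i i) * v i = ∑ j ∈ Finset.univ.erase i, ((-L i j : ℝ) : ℂ) * v j := by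
    have h := congrFun heig i
    simp only [mulVec, dotProduct, map_apply, Matrix.neg_apply, Complex.ofReal_neg, Pi.smul_apply,
      smul_eq_mul, ← Finset.add_sum_erase _ _ (Finset.mem_univ i)] at h
    push_cast
    linear_combination -h
  have hbound : L i i * ‖v i‖ ≤ ∑ j ∈ Finset.univ.erase i, -L i j * ‖v j‖ :=
    calc L i i * ‖v i‖ ≤ ‖μ + L i i‖ * ‖v i‖ := by
          gcongr
          calc L i i ≤ (μ + L i i).re := by simp [hμ]
            _ ≤ ‖μ + L i i‖ := Complex.re_le_norm _
      _ = ‖∑ j ∈ Finset.univ.erase i, ((-L i j : ℝ) : ℂ) * v j‖ := by rw [← hrow_i, norm_mul]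
      _ ≤ ∑ j ∈ Finset.univ.erase i, -L i j * ‖v j‖ := by
          refine (norm_sum_le _ _).trans (Finset.sum_le_sum fun j hj => ?_)
          rw [norm_mul, Complex.norm_real, Real.norm_of_nonneg (hLij j hj)]
  simp only [mulVec, dotProduct, Pi.zero_apply, ← Finset.add_sum_erase _ _ (Finset.mem_univ i)]
  simp only [neg_mul, Finset.sum_neg_distrib] at hbound
  linarith

theorem mulVec_apply_eq_rowSum_mul_add (w : ι → ℝ) (i : ι) :
    (L *ᵥ w) i = (∑ j, L i j) * w i + ∑ j, -L i j * (w i - w j) := by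
  simp only [mulVec, dotProduct, Finset.sum_mul, ← Finset.sum_add_distrib]
  exact Finset.sum_congr rfl fun j _ => by ring

theorem rowSum_mul_eq_zero_and_eq_of_max (hoff : ∀ i j, i ≠ j → L i j ≤ 0) {w : ι → ℝ} {i : ι}
    (hrow : 0 ≤ ∑ j, L i j) (hw : (L *ᵥ w) i ≤ 0) (hw₀ : 0 ≤ w i) (hmax : ∀ j, w j ≤ w i) :
    (∑ j, L i j) * w i = 0 ∧ ∀ j, L i j < 0 → w j = w i := by
  have hterm : ∀ j ∈ Finset.univ, 0 ≤ -L i j * (w i - w j) := fun j _ => by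
    rcases eq_or_ne i j with rfl | hij
    · simp
    · exact mul_nonneg (neg_nonneg.mpr (hoff i j hij)) (sub_nonneg.mpr (hmax j))
  have hdiag : 0 ≤ (∑ j, L i j) * w i := mul_nonneg hrow hw₀
  have hoffdiag := Finset.sum_nonneg hterm
  rw [mulVec_apply_eq_rowSum_mul_add] at hw
  refine ⟨by linarith, fun j hj => ?_⟩
  have hzero := (Finset.sum_eq_zero_iff_of_nonneg hterm).mp (by linarith) j (Finset.mem_univ j)
  have := (mul_eq_zero.mp hzero).resolve_left (neg_ne_zero.mpr hj.ne)
  linarith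

theorem eq_of_reflTransGen_of_max (hoff : ∀ i j, i ≠ j → L i j ≤ 0) (hrow : ∀ i, 0 ≤ ∑ j, L i j)
    {w : ι → ℝ} (hw : L *ᵥ w ≤ 0) (hw₀ : 0 ≤ w) {i j : ι} (hmax : ∀ k, w k ≤ w i)
    (hij : Relation.ReflTransGen (fun a b => a ≠ b ∧ L a b < 0) i j) : w j = w i := by
  induction hij with
  | refl => rfl
  | tail _ hbc ih =>
    rw [← ih] at hmax ⊢
    exact (rowSum_mul_eq_zero_and_eq_of_max hoff (hrow _) (hw _) (hw₀ _) hmax).2 _ hbc.2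

end Compartmental

/-- If `-L` is a compartmental matrix (off-diagonal entries of `L` nonpositive,
row sums of `L` nonnegative) that is outflow-connected (every node has a directed path, in the
digraph with an edge `(i,j)` whenever `i ≠ j` and `L i j < 0`, to a node with strictly positive
row sum of `L`), then every complex eigenvalue of `-L` has strictly negative real part. -/
theorem compartmental_outflow_connected_hurwitz {n : ℕ} (L : Matrix (Fin n) (Fin n) ℝ)
    (hoff : ∀ i j, i ≠ j → L i j ≤ 0)
    (hrow : ∀ i, 0 ≤ ∑ j, L i j)
    (hout : ∀ i : Fin n, ∃ j : Fin n,
      Relation.ReflTransGen (fun a b => a ≠ b ∧ L a b < 0) i j ∧ 0 < ∑ k, L j k)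
    (μ : ℂ) (v : Fin n → ℂ) (hv : v ≠ 0)
    (heig : ((-L).map Complex.ofReal).mulVec v = μ • v) :
    μ.re < 0 := by
  by_contra! hμ
  obtain ⟨i₁, hi₁⟩ := Function.ne_iff.mp hv
  have : Nonempty (Fin n) := ⟨i₁⟩
  obtain ⟨i₀, hi₀⟩ := Finite.exists_max (‖v ·‖)
  have hw := mulVec_norm_nonpos_of_eigenvector_neg hoff hμ heig
  have hw₀ : 0 ≤ (‖v ·‖) := fun _ => norm_nonneg _
  obtain ⟨j, hpath, hj⟩ := hout i₀
  have hj₀ : ‖v j‖ = ‖v i₀‖ := eq_of_reflTransGen_of_max hoff hrow hw hw₀ hi₀ hpath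
  have hjmax : ∀ k, ‖v k‖ ≤ ‖v j‖ := hj₀ ▸ hi₀
  have hjpos : 0 < ‖v j‖ := (norm_pos_iff.mpr hi₁).trans_le (hjmax i₁)
  exact (mul_pos hj hjpos).ne'
    (rowSum_mul_eq_zero_and_eq_of_max hoff (hrow j) (hw j) (hw₀ j) hjmax).1
end

section
/- Let L ∈ ℝ^{n×n} satisfy L_{ij} ≤ 0 for all i ≠ j and Σ_j L_{ij} ≥ 0 for every i (i.e., −L is a compartmental matrix). Consider the digraph on nodes {1,…,n} with an edge (i,j) whenever i ≠ j and L_{ij} < 0, and let S = {i : Σ_j L_{ij} > 0}. If there exists a node i that neither belongs to S nor has a directed path to any node of S (i.e., −L is not outflow-connected), then L is singular, i.e., 0 is an eigenvalue of −L, so −L is not Hurwitz. -/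
open Matrix

/-!
The nodes reachable from `i` form a set `s` that no edge leaves, so `L` has zero entries from `s`
to its complement and is block triangular with diagonal block `L[s, s]`. Every row of `L[s, s]`
has zero sum (it is a full row sum of `L`, nonnegative and not positive), so the all-ones vector
lies in its kernel and `det L = det L[s, s] * det L[sᶜ, sᶜ] = 0`.
-/

namespace Matrix

variable {ι R : Type*}

theorem apply_eq_zero_of_reflTransGen_of_not_reflTransGen [Zero R] [LinearOrder R]
    {L : Matrix ι ι R} (hoff : ∀ i j, i ≠ j → L i j ≤ 0) {i j k : ι}
    (hj : Relation.ReflTransGen (fun a b => a ≠ b ∧ L a b < 0) i j)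
    (hk : ¬Relation.ReflTransGen (fun a b => a ≠ b ∧ L a b < 0) i k) : L j k = 0 := by
  have hjk : j ≠ k := by rintro rfl; exact hk hj
  exact (hoff j k hjk).antisymm (not_lt.mp fun hlt => hk (hj.tail ⟨hjk, hlt⟩))

variable [Fintype ι] [DecidableEq ι]

theorem det_eq_zero_of_sum_row_eq_zero [CommRing R] [IsDomain R] [Nonempty ι]
    {M : Matrix ι ι R} (h : ∀ i, ∑ j, M i j = 0) : M.det = 0 := by
  rw [← exists_mulVec_eq_zero_iff]
  exact ⟨1, one_ne_zero, funext fun i => by simpa [mulVec, dotProduct] using h i⟩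

theorem det_eq_zero_of_absorbing_sum_row_eq_zero [CommRing R] [IsDomain R] {M : Matrix ι ι R}
    {s : ι → Prop} (hs : ∃ i, s i) (habsorbing : ∀ i, s i → ∀ j, ¬s j → M i j = 0)
    (hsum : ∀ i, s i → ∑ j, M i j = 0) : M.det = 0 := by
  classical
  obtain ⟨i, hi⟩ := hs
  have : Nonempty {a // s a} := ⟨⟨i, hi⟩⟩
  rw [twoBlockTriangular_det' M s habsorbing]
  refine mul_eq_zero_of_left (det_eq_zero_of_sum_row_eq_zero fun a => ?_) _
  have houtside : ∑ b : {b // ¬s b}, M a b = 0 :=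
    Finset.sum_eq_zero fun b _ => habsorbing a a.2 b b.2
  rw [← hsum a a.2, ← Fintype.sum_subtype_add_sum_subtype s, houtside, add_zero]
  rfl

end Matrix

/-- If `-L` is a compartmental matrix (off-diagonal entries of `L` nonpositive,
row sums of `L` nonnegative) that is NOT outflow-connected, i.e. there is a node from which no
directed path (in the digraph with an edge `(i,j)` whenever `i ≠ j` and `L i j < 0`) reaches a
node with strictly positive row sum of `L`, then `L` is singular, i.e. `0` is an eigenvalue of
`-L`, so `-L` is not Hurwitz. -/
theorem compartmental_not_outflow_connected_singular {n : ℕ} (L : Matrix (Fin n) (Fin n) ℝ)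
    (hoff : ∀ i j, i ≠ j → L i j ≤ 0)
    (hrow : ∀ i, 0 ≤ ∑ j, L i j)
    (hnot : ∃ i : Fin n, ∀ j : Fin n,
      Relation.ReflTransGen (fun a b => a ≠ b ∧ L a b < 0) i j → ¬ (0 < ∑ k, L j k)) :
    L.det = 0 := by
  obtain ⟨i, hi⟩ := hnot
  exact det_eq_zero_of_absorbing_sum_row_eq_zero ⟨i, .refl⟩
    (fun _ hj _ hk => apply_eq_zero_of_reflTransGen_of_not_reflTransGen hoff hj hk)
    (fun j hj => (not_lt.mp (hi j hj)).antisymm (hrow j))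
end

section
/- Let L ∈ ℝ^{n×n} be such that −L is a compartmental and outflow-connected matrix (L_{ij} ≤ 0 for i ≠ j, Σ_j L_{ij} ≥ 0 for all i, and in the digraph with edges (i,j) whenever i ≠ j and L_{ij} < 0 every node either has strictly positive row sum of L or a directed path to such a node). Then Lᵀ is invertible and, for every constant u ∈ ℝⁿ, the point x* = (Lᵀ)⁻¹u is a globally exponentially stable equilibrium of ẋ = u − Lᵀx: there exist constants K ≥ 1 and λ > 0, depending only on L, such that every differentiable solution x : [0,∞) → ℝⁿ of ẋ(t) = u − Lᵀx(t) satisfies ‖x(t) − x*‖ ≤ K e^{−λt} ‖x(0) − x*‖ for all t ≥ 0. -/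
/-!
Outflow-connectedness yields a vector `w > 0` with `L w > 0`: give node `i` the weight
`1 - ε ^ (dᵢ + 1)`, where `dᵢ` is its distance to a node of positive row sum, and let `ε → 0⁺`.
For such `w` the weighted `ℓ¹` norm `V z = ∑ wᵢ |zᵢ|` contracts under explicit Euler steps of
`ż = -Lᵀ z`: for small `h > 0` the matrix `1 - h L` is entrywise nonnegative, so
`V (z - h Lᵀ z) ≤ ∑ⱼ (w - h L w)ⱼ |zⱼ| ≤ (1 - h λ) V z` whenever `λ w ≤ L w`.
Hence the right Dini derivative of `V (x t - x*)` is at most `-λ V (x t - x*)`, and Grönwall's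
inequality gives exponential decay of `V`, which is equivalent to the sup norm. The same Euler
estimate applied to `z` with `Lᵀ z = 0` forces `z = 0`, so `Lᵀ` is invertible.
-/

open Matrix Filter Topology Set

section Finite

variable {ι : Type*} [Finite ι]

theorem exists_pos_forall_le_of_forall_pos {f : ι → ℝ} (hf : ∀ i, 0 < f i) :
    ∃ c > 0, ∀ i, c ≤ f i := by
  have hle : ∀ i, ∀ᶠ c in 𝓝[>] (0 : ℝ), c ≤ f i := fun i =>
    nhdsWithin_le_nhds (eventually_le_nhds (hf i))
  exact ((eventually_all.2 hle).and self_mem_nhdsWithin).exists.imp fun c hc => ⟨hc.2, hc.1⟩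

theorem eventually_forall_mul_le_one (c : ι → ℝ) : ∀ᶠ h in 𝓝[>] (0 : ℝ), ∀ j, h * c j ≤ 1 := by
  refine eventually_all.2 fun j => nhdsWithin_le_nhds ?_
  have : Tendsto (fun h : ℝ => h * c j) (𝓝 0) (𝓝 0) := by
    simpa using (continuous_mul_const (c j)).tendsto 0
  exact this.eventually (eventually_le_nhds one_pos)

end Finite

def ReachesWithin {α : Type*} (r : α → α → Prop) (P : α → Prop) : ℕ → α → Prop
  | 0, a => P a
  | k + 1, a => ReachesWithin r P k a ∨ ∃ b, r a b ∧ ReachesWithin r P k b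

theorem exists_rank_of_forall_reflTransGen {α : Type*} {r : α → α → Prop} {P : α → Prop}
    (h : ∀ a, ∃ b, Relation.ReflTransGen r a b ∧ P b) :
    ∃ d : α → ℕ, ∀ a, P a ∨ ∃ b, r a b ∧ d b < d a := by
  classical
  have hreach : ∀ a, ∃ k, ReachesWithin r P k a := by
    intro a
    obtain ⟨b, hab, hb⟩ := h a
    induction hab using Relation.ReflTransGen.head_induction_on with
    | refl => exact ⟨0, hb⟩
    | head hac _ ih =>
      obtain ⟨k, hk⟩ := ih
      exact ⟨k + 1, Or.inr ⟨_, hac, hk⟩⟩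
  refine ⟨fun a => Nat.find (hreach a), fun a => ?_⟩
  have hspec := Nat.find_spec (hreach a)
  rcases hk : Nat.find (hreach a) with _ | k
  · rw [hk] at hspec
    exact Or.inl hspec
  · rw [hk] at hspec
    rcases hspec with hka | ⟨b, hab, hkb⟩
    · exact absurd hka (Nat.find_min (hreach a) (hk ▸ k.lt_succ_self))
    · refine Or.inr ⟨b, hab, ?_⟩
      show Nat.find (hreach b) < Nat.find (hreach a)
      exact hk ▸ Nat.lt_succ_of_le (Nat.find_min' (hreach b) hkb)

theorem abs_mulVec_le_mulVec_abs {m ι R : Type*} [Fintype ι] [Ring R] [LinearOrder R]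
    [IsStrictOrderedRing R] {B : Matrix m ι R} (hB : ∀ i j, 0 ≤ B i j) (z : ι → R) :
    |B *ᵥ z| ≤ B *ᵥ |z| := fun i => by
  simpa [mulVec, dotProduct, abs_mul, abs_of_nonneg (hB i _)] using
    Finset.abs_sum_le_sum_abs (fun j => B i j * z j) Finset.univ

section WeightedNorm

variable {ι : Type*} [Fintype ι] {w : ι → ℝ}

theorem dotProduct_abs_le_sum_mul_norm (hw : 0 ≤ w) (z : ι → ℝ) :
    w ⬝ᵥ |z| ≤ (∑ i, w i) * ‖z‖ := by
  calc w ⬝ᵥ |z| ≤ w ⬝ᵥ fun _ => ‖z‖ :=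
        dotProduct_le_dotProduct_of_nonneg_left (fun i => norm_le_pi_norm z i) hw
    _ = (∑ i, w i) * ‖z‖ := by simp [dotProduct, Finset.sum_mul]

theorem exists_pos_mul_norm_le_dotProduct_abs (hw : ∀ i, 0 < w i) :
    ∃ a > 0, ∀ z : ι → ℝ, a * ‖z‖ ≤ w ⬝ᵥ |z| := by
  obtain ⟨a, ha, haw⟩ := exists_pos_forall_le_of_forall_pos hw
  refine ⟨a, ha, fun z => ?_⟩
  suffices ‖z‖ ≤ w ⬝ᵥ |z| / a by rwa [le_div_iff₀' ha] at this
  refine (pi_norm_le_iff_of_nonneg (div_nonneg ?_ ha.le)).2 fun i => ?_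
  · exact dotProduct_nonneg_of_nonneg (fun i => (hw i).le) (abs_nonneg z)
  rw [le_div_iff₀' ha, Real.norm_eq_abs]
  calc a * |z i| ≤ w i * |z i| := by gcongr; exact haw i
    _ ≤ w ⬝ᵥ |z| := Finset.single_le_sum (f := fun j => w j * |z| j)
        (fun j _ => mul_nonneg (hw j).le (abs_nonneg _)) (Finset.mem_univ i)

theorem lipschitzWith_dotProduct_abs (hw : 0 ≤ w) :
    LipschitzWith ⟨∑ i, w i, Finset.sum_nonneg fun i _ => hw i⟩ fun z : ι → ℝ => w ⬝ᵥ |z| := by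
  refine LipschitzWith.of_le_add_mul _ fun a b => ?_
  have habs : |a| ≤ |b| + |a - b| := by simpa using abs_add_le b (a - b)
  calc w ⬝ᵥ |a| ≤ w ⬝ᵥ (|b| + |a - b|) := dotProduct_le_dotProduct_of_nonneg_left habs hw
    _ ≤ w ⬝ᵥ |b| + (∑ i, w i) * dist a b := by
      rw [dotProduct_add, dist_eq_norm]
      exact add_le_add_right (dotProduct_abs_le_sum_mul_norm hw _) _

end WeightedNorm

section Lyapunov

variable {E : Type*} [NormedAddCommGroup E] [NormedSpace ℝ E]

theorem tendsto_sub_nhdsGT (s : ℝ) : Tendsto (fun z => z - s) (𝓝[>] s) (𝓝[>] 0) := by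
  refine tendsto_nhdsWithin_of_tendsto_nhds_of_eventually_within _ ?_ ?_
  · exact ((continuous_sub_right s).tendsto' s 0 (sub_self s)).mono_left nhdsWithin_le_nhds
  · filter_upwards [self_mem_nhdsWithin] with z hz using sub_pos.2 (mem_Ioi.1 hz)

theorem le_mul_exp_of_eventually_euler_step_le {V : E → ℝ} {C : NNReal} (hV : LipschitzWith C V)
    {F : E → E} {lam : ℝ}
    (hstep : ∀ z, ∀ᶠ h in 𝓝[>] (0 : ℝ), V (z + h • F z) ≤ (1 - h * lam) * V z)
    {y : ℝ → E} (hy : ∀ s ≥ 0, HasDerivAt y (F (y s)) s) {t : ℝ} (ht : 0 ≤ t) :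
    V (y t) ≤ V (y 0) * Real.exp (-lam * t) := by
  have hcont : ContinuousOn (fun s => V (y s)) (Icc 0 t) :=
    hV.continuous.comp_continuousOn fun s hs => (hy s hs.1).continuousAt.continuousWithinAt
  have hdini : ∀ s ∈ Ico 0 t, ∀ r, -lam * V (y s) < r →
      ∃ᶠ z in 𝓝[>] s, (z - s)⁻¹ * (V (y z) - V (y s)) < r := by
    intro s hs r hr
    have hslope : Tendsto (slope y s) (𝓝[>] s) (𝓝 (F (y s))) :=
      (hasDerivAt_iff_tendsto_slope.1 (hy s hs.1)).mono_left
        (nhdsWithin_mono _ fun z hz => ne_of_gt (mem_Ioi.1 hz))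
    set g : ℝ → ℝ := fun z => -lam * V (y s) + C * ‖slope y s z - F (y s)‖
    have hg : Tendsto g (𝓝[>] s) (𝓝 (-lam * V (y s) + C * ‖F (y s) - F (y s)‖)) :=
      tendsto_const_nhds.add ((hslope.sub_const (F (y s))).norm.const_mul (C : ℝ))
    rw [sub_self, norm_zero, mul_zero, add_zero] at hg
    refine Eventually.frequently ?_
    filter_upwards [hg.eventually (gt_mem_nhds hr), (tendsto_sub_nhdsGT s).eventually (hstep (y s)),
      self_mem_nhdsWithin] with z hgz hstepz hz
    have hh : 0 < z - s := sub_pos.2 (mem_Ioi.1 hz)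
    have hrem : y z - (y s + (z - s) • F (y s)) = (z - s) • (slope y s z - F (y s)) := by
      rw [slope_def_module, smul_sub, smul_inv_smul₀ hh.ne']; abel
    have hincr : V (y z) - V (y s) ≤ (z - s) * g z := by
      calc V (y z) - V (y s)
          ≤ V (y s + (z - s) • F (y s)) + C * dist (y z) (y s + (z - s) • F (y s)) - V (y s) :=
            sub_le_sub_right (hV.le_add_mul _ _) _
        _ ≤ (1 - (z - s) * lam) * V (y s) + C * ((z - s) * ‖slope y s z - F (y s)‖) - V (y s) := by
            rw [dist_eq_norm, hrem, norm_smul, Real.norm_of_nonneg hh.le]; gcongr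
        _ = (z - s) * g z := by ring
    calc (z - s)⁻¹ * (V (y z) - V (y s)) ≤ g z := by
          rw [inv_mul_le_iff₀ hh]; exact hincr
      _ < r := hgz
  have := le_gronwallBound_of_liminf_deriv_right_le hcont hdini le_rfl
    (fun _ _ => (add_zero _).ge) t ⟨ht, le_rfl⟩
  rwa [sub_zero, gronwallBound_ε0] at this

end Lyapunov

section Compartmental

variable {ι : Type*} [Fintype ι] [DecidableEq ι] {L : Matrix ι ι ℝ}

theorem dotProduct_abs_sub_smul_transpose_mulVec_le (hoff : ∀ i j, i ≠ j → L i j ≤ 0)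
    {w : ι → ℝ} (hw : 0 ≤ w) {h : ℝ} (hh : 0 ≤ h) (hdiag : ∀ j, h * L j j ≤ 1) (z : ι → ℝ) :
    w ⬝ᵥ |z - h • (Lᵀ *ᵥ z)| ≤ (w - h • (L *ᵥ w)) ⬝ᵥ |z| := by
  set B : Matrix ι ι ℝ := 1 - h • L
  have hB : ∀ i j, 0 ≤ B i j := by
    intro i j
    rcases eq_or_ne i j with rfl | hij
    · simpa [B] using hdiag i
    · simpa [B, one_apply_ne hij] using mul_nonpos_of_nonneg_of_nonpos hh (hoff i j hij)
  have hz : z - h • (Lᵀ *ᵥ z) = Bᵀ *ᵥ z := by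
    simp [B, transpose_sub, sub_mulVec, smul_mulVec]
  have hw' : w - h • (L *ᵥ w) = B *ᵥ w := by
    simp [B, sub_mulVec, smul_mulVec]
  calc w ⬝ᵥ |z - h • (Lᵀ *ᵥ z)| ≤ w ⬝ᵥ (Bᵀ *ᵥ |z|) := by
        rw [hz]
        exact dotProduct_le_dotProduct_of_nonneg_left
          (abs_mulVec_le_mulVec_abs (fun i j => hB j i) z) hw
    _ = (w - h • (L *ᵥ w)) ⬝ᵥ |z| := by rw [dotProduct_mulVec, vecMul_transpose, hw']

theorem exists_pos_mulVec_pos_of_rank (hoff : ∀ i j, i ≠ j → L i j ≤ 0)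
    (hrow : ∀ i, 0 ≤ ∑ j, L i j) (d : ι → ℕ)
    (hd : ∀ i, 0 < ∑ j, L i j ∨ ∃ j, (i ≠ j ∧ L i j < 0) ∧ d j < d i) :
    ∃ w : ι → ℝ, (∀ i, 0 < w i) ∧ ∀ i, 0 < (L *ᵥ w) i := by
  set w : ℝ → ι → ℝ := fun ε i => 1 - ε ^ (d i + 1)
  have hLw : ∀ ε i, (L *ᵥ w ε) i = ∑ j, L i j - ∑ j, L i j * ε ^ (d j + 1) := by
    simp [w, mulVec, dotProduct, mul_sub, Finset.sum_sub_distrib]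
  have hsmall : ∀ᶠ ε in 𝓝[>] (0 : ℝ), 0 < ε ∧ ε < 1 := by
    filter_upwards [self_mem_nhdsWithin, nhdsWithin_le_nhds (eventually_lt_nhds one_pos)]
      with ε hε0 hε1 using ⟨hε0, hε1⟩
  have hpos : ∀ i, ∀ᶠ ε in 𝓝[>] (0 : ℝ), 0 < (L *ᵥ w ε) i := by
    intro i
    rcases hd i with hrow_pos | ⟨j, ⟨hij, hLij⟩, hdj⟩
    · have hcont : Tendsto (fun ε : ℝ => ∑ j, L i j * ε ^ (d j + 1)) (𝓝 0) (𝓝 0) := by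
        simpa using ((by fun_prop : Continuous fun ε : ℝ => ∑ j, L i j * ε ^ (d j + 1)).tendsto 0)
      filter_upwards [nhdsWithin_le_nhds (hcont.eventually (eventually_lt_nhds hrow_pos))]
        with ε hε
      rw [hLw]; linarith
    · have hcont : Tendsto (fun ε : ℝ => L i i * ε + L i j) (𝓝 0) (𝓝 (L i j)) := by
        simpa using ((by fun_prop : Continuous fun ε : ℝ => L i i * ε + L i j).tendsto 0)
      filter_upwards [nhdsWithin_le_nhds (hcont.eventually (eventually_lt_nhds hLij)), hsmall]
        with ε hlin ⟨hε0, hε1⟩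
      have hsum : ∑ k, L i k * ε ^ (d k + 1) ≤ ε ^ d i * (L i i * ε + L i j) := by
        calc ∑ k, L i k * ε ^ (d k + 1) ≤ ∑ k ∈ {i, j}, L i k * ε ^ (d k + 1) :=
              Finset.sum_le_sum_of_subset_of_nonpos' (Finset.subset_univ _) fun k _ hk =>
                mul_nonpos_of_nonpos_of_nonneg (hoff i k (by grind)) (by positivity)
          _ ≤ L i i * ε ^ (d i + 1) + L i j * ε ^ d i := by
              rw [Finset.sum_pair hij]
              gcongr L i i * ε ^ (d i + 1) + ?_
              exact mul_le_mul_of_nonpos_left (pow_le_pow_of_le_one hε0.le hε1.le hdj) hLij.le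
          _ = ε ^ d i * (L i i * ε + L i j) := by ring
      have : ε ^ d i * (L i i * ε + L i j) < 0 := mul_neg_of_pos_of_neg (by positivity) hlin
      rw [hLw]; linarith [hrow i]
  obtain ⟨ε, hLwε, hε0, hε1⟩ := ((eventually_all.2 hpos).and hsmall).exists
  exact ⟨w ε, fun i => sub_pos.2 (pow_lt_one₀ hε0.le hε1 (Nat.succ_ne_zero _)), hLwε⟩

theorem eventually_dotProduct_abs_euler_step_le (hoff : ∀ i j, i ≠ j → L i j ≤ 0)
    {w : ι → ℝ} (hw : 0 ≤ w) {lam : ℝ} (hlam : ∀ j, lam * w j ≤ (L *ᵥ w) j) (z : ι → ℝ) :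
    ∀ᶠ h in 𝓝[>] (0 : ℝ), w ⬝ᵥ |z + h • -(Lᵀ *ᵥ z)| ≤ (1 - h * lam) * (w ⬝ᵥ |z|) := by
  filter_upwards [eventually_forall_mul_le_one fun j => L j j, self_mem_nhdsWithin]
    with h hdiag hh
  rw [smul_neg, ← sub_eq_add_neg]
  calc w ⬝ᵥ |z - h • (Lᵀ *ᵥ z)| ≤ (w - h • (L *ᵥ w)) ⬝ᵥ |z| :=
        dotProduct_abs_sub_smul_transpose_mulVec_le hoff hw (le_of_lt hh) hdiag z
    _ ≤ ((1 - h * lam) • w) ⬝ᵥ |z| := by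
        refine dotProduct_le_dotProduct_of_nonneg_right (fun j => ?_) (abs_nonneg z)
        have := mul_le_mul_of_nonneg_left (hlam j) (le_of_lt hh)
        simp only [Pi.sub_apply, Pi.smul_apply, smul_eq_mul]
        linarith
    _ = (1 - h * lam) * (w ⬝ᵥ |z|) := by rw [smul_dotProduct, smul_eq_mul]

theorem dotProduct_abs_le_mul_exp_of_hasDerivAt (hoff : ∀ i j, i ≠ j → L i j ≤ 0)
    {w : ι → ℝ} (hw : 0 ≤ w) {lam : ℝ} (hlam : ∀ j, lam * w j ≤ (L *ᵥ w) j)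
    {y : ℝ → ι → ℝ} (hy : ∀ s ≥ 0, HasDerivAt y (-(Lᵀ *ᵥ y s)) s) {t : ℝ} (ht : 0 ≤ t) :
    w ⬝ᵥ |y t| ≤ w ⬝ᵥ |y 0| * Real.exp (-lam * t) :=
  le_mul_exp_of_eventually_euler_step_le (lipschitzWith_dotProduct_abs hw)
    (F := fun z => -(Lᵀ *ᵥ z)) (eventually_dotProduct_abs_euler_step_le hoff hw hlam) hy ht

theorem isUnit_transpose_of_pos_of_mulVec_pos (hoff : ∀ i j, i ≠ j → L i j ≤ 0)
    {w : ι → ℝ} (hw : ∀ i, 0 < w i) (hLw : ∀ i, 0 < (L *ᵥ w) i) : IsUnit Lᵀ := by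
  refine mulVec_injective_iff_isUnit.1 fun a b hab => sub_eq_zero.1 ?_
  have hz : Lᵀ *ᵥ (a - b) = 0 := by rw [mulVec_sub, hab, sub_self]
  obtain ⟨h, hdiag, hh⟩ :=
    ((eventually_forall_mul_le_one fun j => L j j).and self_mem_nhdsWithin).exists
  have hstep := dotProduct_abs_sub_smul_transpose_mulVec_le hoff (fun i => (hw i).le)
    (le_of_lt hh) hdiag (a - b)
  rw [hz, smul_zero, sub_zero, sub_dotProduct, smul_dotProduct, smul_eq_mul] at hstep
  obtain ⟨c, hc, hcz⟩ := exists_pos_mul_norm_le_dotProduct_abs hLw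
  have : h * (c * ‖a - b‖) ≤ 0 := by nlinarith [hcz (a - b)]
  exact norm_le_zero_iff.1 (nonpos_of_mul_nonpos_right (nonpos_of_mul_nonpos_right this hh) hc)

end Compartmental

/-- If `-L` is a compartmental, outflow-connected matrix, then `Lᵀ` is invertible
and for every constant inflow `u` the point `x* = (Lᵀ)⁻¹ u` is a globally exponentially stable
equilibrium of `ẋ = u − Lᵀ x`: there are `K ≥ 1` and `λ > 0`, depending only on `L`, such that
every solution satisfies `‖x(t) − x*‖ ≤ K e^{−λt} ‖x(0) − x*‖` for all `t ≥ 0`. -/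
theorem affine_flow_network_global_exponential_stability {n : ℕ}
    (L : Matrix (Fin n) (Fin n) ℝ)
    (hoff : ∀ i j, i ≠ j → L i j ≤ 0)
    (hrow : ∀ i, 0 ≤ ∑ j, L i j)
    (hout : ∀ i : Fin n, ∃ j : Fin n,
      Relation.ReflTransGen (fun a b => a ≠ b ∧ L a b < 0) i j ∧ 0 < ∑ k, L j k) :
    IsUnit Lᵀ ∧
    ∃ K ≥ (1 : ℝ), ∃ lam > (0 : ℝ), ∀ (u : Fin n → ℝ) (x : ℝ → Fin n → ℝ),
      (∀ t ≥ (0 : ℝ), HasDerivAt x (u - Lᵀ.mulVec (x t)) t) →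
      ∀ t ≥ (0 : ℝ),
        ‖x t - Lᵀ⁻¹.mulVec u‖ ≤ K * Real.exp (-lam * t) * ‖x 0 - Lᵀ⁻¹.mulVec u‖ := by
  obtain ⟨d, hd⟩ := exists_rank_of_forall_reflTransGen hout
  obtain ⟨w, hw, hLw⟩ := exists_pos_mulVec_pos_of_rank hoff hrow d hd
  obtain ⟨lam, hlam, hlamw⟩ := exists_pos_forall_le_of_forall_pos fun i => div_pos (hLw i) (hw i)
  obtain ⟨a, ha, hnorm⟩ := exists_pos_mul_norm_le_dotProduct_abs hw
  have hunit := isUnit_transpose_of_pos_of_mulVec_pos hoff hw hLw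
  refine ⟨hunit, max 1 ((∑ i, w i) / a), le_max_left _ _, lam, hlam, fun u x hx t ht => ?_⟩
  set xs := Lᵀ⁻¹ *ᵥ u
  have hy : ∀ s ≥ 0, HasDerivAt (fun s => x s - xs) (-(Lᵀ *ᵥ (x s - xs))) s := by
    intro s hs
    rw [mulVec_sub, mulVec_mulVec, mul_nonsing_inv _ ((isUnit_iff_isUnit_det _).1 hunit),
      one_mulVec, neg_sub]
    exact (hx s hs).sub_const xs
  have hdecay := dotProduct_abs_le_mul_exp_of_hasDerivAt hoff (fun i => (hw i).le)
    (fun j => (le_div_iff₀ (hw j)).1 (hlamw j)) hy ht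
  calc ‖x t - xs‖ ≤ w ⬝ᵥ |x t - xs| / a := by rw [le_div_iff₀' ha]; exact hnorm _
    _ ≤ w ⬝ᵥ |x 0 - xs| * Real.exp (-lam * t) / a := by gcongr
    _ ≤ (∑ i, w i) * ‖x 0 - xs‖ * Real.exp (-lam * t) / a := by
        gcongr; exact dotProduct_abs_le_sum_mul_norm (fun i => (hw i).le) _
    _ = (∑ i, w i) / a * Real.exp (-lam * t) * ‖x 0 - xs‖ := by ring
    _ ≤ max 1 ((∑ i, w i) / a) * Real.exp (-lam * t) * ‖x 0 - xs‖ := by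
        gcongr; exact le_max_right _ _
end

section
/- Let R ∈ ℝ^{n×n} be substochastic (R_{ij} ≥ 0 for all i,j and Σ_j R_{ij} ≤ 1 for all i) and outflow-connected: in the digraph with an edge (i,j) whenever R_{ij} > 0, every node i either satisfies Σ_j R_{ij} < 1 or has a directed path to some node j with Σ_k R_{jk} < 1. Then every complex eigenvalue of R has modulus strictly less than 1; consequently I − R is invertible and (I − R)⁻¹ = Σ_{k=0}^∞ R^k, a matrix with nonnegative entries. -/
/-!
Measure matrices by the `ℓ∞` operator norm, the largest absolute row sum. For substochastic `R`
the row sums of `R ^ k` do not increase with `k`, and an edge `a → b` passes a deficit (row sum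
`< 1`) of `R ^ m` at `b` on to `R ^ (m + 1)` at `a`; so outflow-connectedness yields `M > 0` with
`‖R ^ M‖ < 1`. Eigenvalues then satisfy `‖μ‖ ^ M ≤ ‖R ^ M‖ < 1`, and since `k ↦ ‖R ^ k‖` is
antitone with `‖R ^ (M * q)‖ ≤ ‖R ^ M‖ ^ q`, the Neumann series converges absolutely.
-/

open Matrix Finset

attribute [local instance] Matrix.linftyOpSeminormedAddCommGroup
  Matrix.linftyOpNormedAddCommGroup Matrix.linftyOpNormedRing

theorem summable_norm_pow_of_norm_pow_lt_one {A : Type*} [NormedRing A] {x : A} (hx : ‖x‖ ≤ 1)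
    {M : ℕ} (hM : 0 < M) (hxM : ‖x ^ M‖ < 1) : Summable fun k => ‖x ^ k‖ := by
  have : NeZero M := ⟨hM.ne'⟩
  have hanti : Antitone fun k => ‖x ^ k‖ := antitone_nat_of_succ_le fun k => calc
    ‖x ^ (k + 1)‖ ≤ ‖x ^ k‖ * ‖x‖ := pow_succ x k ▸ norm_mul_le _ _
    _ ≤ ‖x ^ k‖ := mul_le_of_le_one_right (norm_nonneg _) hx
  rw [← summable_indicator_mod_iff hanti (0 : ZMod M), ← Nat.cast_zero,
    summable_indicator_mod_iff_summable]
  simp only [add_zero, pow_mul]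
  refine (summable_geometric_of_lt_one (norm_nonneg _) hxM).of_norm_bounded_eventually_nat ?_
  filter_upwards [eventually_norm_pow_le (x ^ M)] with k hk
  rwa [norm_norm]

namespace Matrix

section LinftyOp

variable {m n α β : Type*} [Fintype m] [Fintype n]

theorem linfty_opNorm_le_iff [SeminormedAddCommGroup α] {r : ℝ} (hr : 0 ≤ r)
    (A : Matrix m n α) : ‖A‖ ≤ r ↔ ∀ i, ∑ j, ‖A i j‖ ≤ r := by
  change ‖fun i => WithLp.toLp 1 (A i)‖ ≤ r ↔ _
  simp only [pi_norm_le_iff_of_nonneg hr, PiLp.norm_eq_of_L1]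

theorem linfty_opNorm_lt_iff [SeminormedAddCommGroup α] {r : ℝ} (hr : 0 < r)
    (A : Matrix m n α) : ‖A‖ < r ↔ ∀ i, ∑ j, ‖A i j‖ < r := by
  change ‖fun i => WithLp.toLp 1 (A i)‖ < r ↔ _
  simp only [pi_norm_lt_iff hr, PiLp.norm_eq_of_L1]

theorem linfty_opNorm_map_of_norm_map_eq [SeminormedAddCommGroup α] [SeminormedAddCommGroup β]
    (A : Matrix m n α) {f : α → β} (hf : ∀ a, ‖f a‖ = ‖a‖) : ‖A.map f‖ = ‖A‖ := by
  have hf' : ∀ a, ‖f a‖₊ = ‖a‖₊ := fun a => NNReal.eq (hf a)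
  simp only [linfty_opNorm_def, map_apply, hf']

theorem norm_le_linfty_opNorm_of_mulVec_eq_smul [NormedField α] {A : Matrix n n α} {μ : α}
    {v : n → α} (hv : v ≠ 0) (h : A *ᵥ v = μ • v) : ‖μ‖ ≤ ‖A‖ := by
  refine le_of_mul_le_mul_right ?_ (norm_pos_iff.mpr hv)
  calc ‖μ‖ * ‖v‖ = ‖A *ᵥ v‖ := by rw [h, norm_smul]
    _ ≤ ‖A‖ * ‖v‖ := linfty_opNorm_mulVec A v

end LinftyOp

theorem pow_mulVec_of_mulVec_eq_smul {n α : Type*} [Fintype n] [DecidableEq n] [CommSemiring α]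
    {A : Matrix n n α} {μ : α} {v : n → α} (h : A *ᵥ v = μ • v) (k : ℕ) :
    (A ^ k) *ᵥ v = μ ^ k • v := by
  induction k with
  | zero => simp
  | succ k ih => rw [pow_succ', ← mulVec_mulVec, ih, mulVec_smul, h, smul_smul, ← pow_succ]

theorem sum_pow_add_apply {n α : Type*} [Fintype n] [DecidableEq n] [Semiring α]
    (A : Matrix n n α) (a b : ℕ) (i : n) :
    ∑ j, (A ^ (a + b)) i j = ∑ l, (A ^ a) i l * ∑ j, (A ^ b) l j := by
  simp only [pow_add, mul_apply, mul_sum]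
  exact sum_comm

section Substochastic

variable {n : Type*} [Fintype n] [DecidableEq n] {R : Matrix n n ℝ}
  (hR : ∀ i j, 0 ≤ R i j) (hsub : ∀ i, ∑ j, R i j ≤ 1)
include hR hsub

theorem antitone_sum_pow_apply (i : n) : Antitone fun k => ∑ j, (R ^ k) i j := by
  refine antitone_nat_of_succ_le fun k => ?_
  rw [sum_pow_add_apply, pow_one]
  exact sum_le_sum fun l _ => mul_le_of_le_one_right (pow_apply_nonneg hR k i l) (hsub l)

theorem sum_pow_apply_le_one (k : ℕ) (i : n) : ∑ j, (R ^ k) i j ≤ 1 :=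
  (antitone_sum_pow_apply hR hsub i k.zero_le).trans_eq (by simp [one_apply])

theorem exists_sum_pow_apply_lt_one_of_reflTransGen {i j : n}
    (hij : Relation.ReflTransGen (fun a b => 0 < R a b) i j) (hj : ∑ k, R j k < 1) :
    ∃ m, ∑ k, (R ^ m) i k < 1 := by
  induction hij using Relation.ReflTransGen.head_induction_on with
  | refl => exact ⟨1, by simpa using hj⟩
  | @head a b hab _ ih =>
    obtain ⟨m, hm⟩ := ih
    refine ⟨1 + m, ?_⟩
    rw [sum_pow_add_apply, pow_one]
    calc ∑ l, R a l * ∑ k, (R ^ m) l k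
        < ∑ l, R a l :=
          sum_lt_sum
            (fun l _ => mul_le_of_le_one_right (hR a l) (sum_pow_apply_le_one hR hsub m l))
            ⟨b, mem_univ b, mul_lt_of_lt_one_right hab hm⟩
      _ ≤ 1 := hsub a

theorem linfty_opNorm_le_one : ‖R‖ ≤ 1 :=
  (linfty_opNorm_le_iff zero_le_one R).mpr fun i =>
    (sum_congr rfl fun j _ => Real.norm_of_nonneg (hR i j)).trans_le (hsub i)

theorem exists_pos_linfty_opNorm_pow_lt_one
    (hout : ∀ i, ∃ j, Relation.ReflTransGen (fun a b => 0 < R a b) i j ∧ ∑ k, R j k < 1) :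
    ∃ M, 0 < M ∧ ‖R ^ M‖ < 1 := by
  choose m hm using fun i => (hout i).elim fun _ hj =>
    exists_sum_pow_apply_lt_one_of_reflTransGen hR hsub hj.1 hj.2
  refine ⟨univ.sup m + 1, Nat.succ_pos _, (linfty_opNorm_lt_iff one_pos _).mpr fun i => ?_⟩
  have hmi : m i ≤ univ.sup m + 1 := (le_sup (mem_univ i)).trans (Nat.le_succ _)
  calc ∑ j, ‖(R ^ (univ.sup m + 1)) i j‖
      = ∑ j, (R ^ (univ.sup m + 1)) i j :=
        sum_congr rfl fun j _ => Real.norm_of_nonneg (pow_apply_nonneg hR _ i j)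
    _ ≤ ∑ j, (R ^ m i) i j := antitone_sum_pow_apply hR hsub i hmi
    _ < 1 := hm i

end Substochastic

end Matrix

/-- A substochastic, outflow-connected matrix `R` has all its complex eigenvalues
of modulus strictly less than `1`; consequently `I − R` is invertible and
`(I − R)⁻¹ = Σ_{k=0}^∞ R^k`, a matrix with nonnegative entries. -/
theorem substochastic_outflow_connected_spectral_radius_lt_one {n : ℕ}
    (R : Matrix (Fin n) (Fin n) ℝ)
    (hnn : ∀ i j, 0 ≤ R i j)
    (hsub : ∀ i, ∑ j, R i j ≤ 1)
    (hout : ∀ i : Fin n, ∃ j : Fin n,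
      Relation.ReflTransGen (fun a b => 0 < R a b) i j ∧ ∑ k, R j k < 1) :
    (∀ (μ : ℂ) (v : Fin n → ℂ), v ≠ 0 →
        (R.map Complex.ofReal).mulVec v = μ • v → ‖μ‖ < 1) ∧
    IsUnit (1 - R) ∧
    (∀ i j, HasSum (fun k : ℕ => (R ^ k) i j) ((1 - R)⁻¹ i j)) ∧
    (∀ i j, 0 ≤ (1 - R)⁻¹ i j) := by
  obtain ⟨M, hM, hRM⟩ := exists_pos_linfty_opNorm_pow_lt_one hnn hsub hout
  -- instance search does not identify the uniformity of the local norm with the product one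
  have : @CompleteSpace (Matrix (Fin n) (Fin n) ℝ) PseudoMetricSpace.toUniformSpace :=
    inferInstanceAs (CompleteSpace (Fin n → Fin n → ℝ))
  have hsum : Summable (R ^ ·) :=
    (summable_norm_pow_of_norm_pow_lt_one (linfty_opNorm_le_one hnn hsub) hM hRM).of_norm
  have hinv : (1 - R)⁻¹ = ∑' k, R ^ k := inv_eq_right_inv hsum.one_sub_mul_tsum_pow
  have hentry : ∀ i j, HasSum (fun k : ℕ => (R ^ k) i j) ((1 - R)⁻¹ i j) := fun i j => by
    rw [hinv]
    exact Pi.hasSum.mp (Pi.hasSum.mp hsum.hasSum i) j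
  refine ⟨fun μ v hv hμ => ?_,
    ⟨⟨1 - R, _, hsum.one_sub_mul_tsum_pow, hsum.tsum_pow_mul_one_sub⟩, rfl⟩, hentry,
    fun i j => (hentry i j).nonneg fun k => pow_apply_nonneg hnn k i j⟩
  have hμM : ‖μ‖ ^ M ≤ ‖R ^ M‖ := by
    have hmap : (R ^ M).map Complex.ofReal = R.map Complex.ofReal ^ M :=
      R.map_pow Complex.ofRealHom M
    rw [← norm_pow, ← linfty_opNorm_map_of_norm_map_eq (R ^ M) Complex.norm_real, hmap]
    exact norm_le_linfty_opNorm_of_mulVec_eq_smul hv (pow_mulVec_of_mulVec_eq_smul hμ M)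
  exact (pow_lt_one_iff_of_nonneg (norm_nonneg μ) hM.ne').mp (hμM.trans_lt hRM)
end

section
/- Let R ∈ ℝ^{n×n} be substochastic (R_{ij} ≥ 0 for all i,j and Σ_j R_{ij} ≤ 1 for all i) and outflow-connected (in the digraph with an edge (i,j) whenever R_{ij} > 0, every node i either satisfies Σ_j R_{ij} < 1 or has a directed path to some node j with Σ_k R_{jk} < 1), and let u ∈ ℝⁿ be entrywise nonnegative. If an index i is such that either u_i > 0 or there exist an index h with u_h > 0 and a directed path from h to i in the digraph with edges {(j,k) : R_{jk} > 0}, then the i-th entry of z* = (I − Rᵀ)⁻¹ u is strictly positive. -/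
/-!
Writing `B = (1 - R)⁻¹`, we have `(1 - Rᵀ)⁻¹ *ᵥ u = u ᵥ* B`, so it suffices that every entry of
`B` is nonnegative and that `B h i > 0` whenever `i` is reachable from `h`. Each column `c` of
`B` solves `c = eᵢ + R *ᵥ c`, and solutions of `c = v + R *ᵥ c` with `v ≥ 0` are nonnegative by
a minimum principle: at a negative minimum of `c` the row of `R` must sum to `1` and all
successors must attain the same minimum, which outflow-connectivity rules out. The same
principle with `v = 0` shows that `1 - R` is invertible. Finally `B a i ≥ R a b * B b i` and
`B i i ≥ 1` propagate positivity backwards along paths ending at `i`.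
-/

open Matrix Relation

namespace Matrix

variable {ι 𝕜 : Type*} [Fintype ι] [Field 𝕜] [LinearOrder 𝕜] [IsStrictOrderedRing 𝕜]

structure IsSubstochastic (R : Matrix ι ι 𝕜) : Prop where
  nonneg : ∀ i j, 0 ≤ R i j
  rowSum_le_one : ∀ i, ∑ j, R i j ≤ 1

def IsOutflowConnected (R : Matrix ι ι 𝕜) : Prop :=
  ∀ i, ∃ j, ReflTransGen (fun a b => 0 < R a b) i j ∧ ∑ k, R j k < 1

theorem inv_one_sub_apply {α : Type*} [CommRing α] [DecidableEq ι] {R : Matrix ι ι α}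
    (hdet : IsUnit (1 - R).det) (a i : ι) :
    (1 - R)⁻¹ a i = (1 : Matrix ι ι α) a i + ∑ k, R a k * (1 - R)⁻¹ k i := by
  have h : (1 - R)⁻¹ = 1 + R * (1 - R)⁻¹ :=
    calc (1 - R)⁻¹ = (1 - R + R) * (1 - R)⁻¹ := by rw [sub_add_cancel, one_mul]
      _ = 1 + R * (1 - R)⁻¹ := by rw [add_mul, mul_nonsing_inv _ hdet]
  exact congrFun (congrFun h a) i

namespace IsSubstochastic

variable {R : Matrix ι ι 𝕜}

theorem rowSum_eq_one_and_eq_of_isMin_of_neg (hR : R.IsSubstochastic) {v c : ι → 𝕜}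
    (hv : 0 ≤ v) (hc : c = v + R *ᵥ c) {a : ι} (hmin : ∀ j, c a ≤ c j) (hneg : c a < 0) :
    ∑ k, R a k = 1 ∧ ∀ j, 0 < R a j → c j = c a := by
  have hva : 0 ≤ v a := hv a
  have hterms : ∀ j ∈ Finset.univ, 0 ≤ R a j * (c j - c a) :=
    fun j _ => mul_nonneg (hR.nonneg a j) (sub_nonneg.2 (hmin j))
  have hsum : ∑ j, R a j * (c j - c a) = c a * (1 - ∑ j, R a j) - v a := by
    have hca : c a = v a + ∑ j, R a j * c j := congrFun hc a
    simp only [mul_sub, Finset.sum_sub_distrib, ← Finset.sum_mul]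
    linear_combination -hca
  have hdefect : c a * (1 - ∑ j, R a j) ≤ 0 :=
    mul_nonpos_of_nonpos_of_nonneg hneg.le (sub_nonneg.2 (hR.rowSum_le_one a))
  have hzero : ∑ j, R a j * (c j - c a) = 0 := by
    refine le_antisymm ?_ (Finset.sum_nonneg hterms)
    linarith
  constructor
  · have hdefect_zero : c a * (1 - ∑ j, R a j) = 0 := by linarith
    linarith [(mul_eq_zero.1 hdefect_zero).resolve_left hneg.ne]
  · intro j hj
    have hterm_zero := (Finset.sum_eq_zero_iff_of_nonneg hterms).1 hzero j (Finset.mem_univ j)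
    linarith [(mul_eq_zero.1 hterm_zero).resolve_left hj.ne']

theorem nonneg_of_eq_add_mulVec (hR : R.IsSubstochastic) (hout : R.IsOutflowConnected)
    {v c : ι → 𝕜} (hv : 0 ≤ v) (hc : c = v + R *ᵥ c) : 0 ≤ c := by
  by_contra hcon
  obtain ⟨i₀, hi₀⟩ : ∃ i, c i < 0 := by simpa [Pi.le_def] using hcon
  have : Nonempty ι := ⟨i₀⟩
  obtain ⟨a, hmin⟩ := Finite.exists_min c
  have hneg : c a < 0 := (hmin i₀).trans_lt hi₀
  obtain ⟨j, hpath, hlt⟩ := hout a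
  have hcj : c j = c a := by
    clear hlt
    induction hpath with
    | refl => rfl
    | tail _ hbj ih =>
      have hb := hR.rowSum_eq_one_and_eq_of_isMin_of_neg hv hc (ih ▸ hmin) (ih ▸ hneg)
      exact (hb.2 _ hbj).trans ih
  exact hlt.ne (hR.rowSum_eq_one_and_eq_of_isMin_of_neg hv hc (hcj ▸ hmin) (hcj ▸ hneg)).1

variable [DecidableEq ι]

theorem isUnit_det_one_sub (hR : R.IsSubstochastic) (hout : R.IsOutflowConnected) :
    IsUnit (1 - R).det := by
  refine isUnit_iff_ne_zero.2 fun hdet => ?_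
  obtain ⟨x, hx0, hx⟩ := exists_mulVec_eq_zero_iff.2 hdet
  have hfix : x = 0 + R *ᵥ x := by
    rw [sub_mulVec, one_mulVec, sub_eq_zero] at hx
    rwa [zero_add]
  have hfix_neg : -x = 0 + R *ᵥ -x := by rw [mulVec_neg, ← neg_zero, ← neg_add, ← hfix]
  have hx_nonneg := hR.nonneg_of_eq_add_mulVec hout le_rfl hfix
  have hx_nonpos := neg_nonneg.1 (hR.nonneg_of_eq_add_mulVec hout le_rfl hfix_neg)
  exact hx0 (le_antisymm hx_nonpos hx_nonneg)

theorem inv_one_sub_apply_nonneg (hR : R.IsSubstochastic) (hout : R.IsOutflowConnected) (a i : ι) :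
    0 ≤ (1 - R)⁻¹ a i := by
  have hunit := hR.isUnit_det_one_sub hout
  have hcol : (fun h => (1 - R)⁻¹ h i) =
      (fun h => (1 : Matrix ι ι 𝕜) h i) + R *ᵥ fun h => (1 - R)⁻¹ h i :=
    funext fun h => inv_one_sub_apply hunit h i
  exact hR.nonneg_of_eq_add_mulVec hout (fun h => zero_le_one_elem h i) hcol a

theorem mul_inv_one_sub_apply_nonneg (hR : R.IsSubstochastic) (hout : R.IsOutflowConnected)
    (a k i : ι) : 0 ≤ R a k * (1 - R)⁻¹ k i :=
  mul_nonneg (hR.nonneg a k) (hR.inv_one_sub_apply_nonneg hout k i)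

theorem mul_le_inv_one_sub_apply (hR : R.IsSubstochastic) (hout : R.IsOutflowConnected)
    (a b i : ι) : R a b * (1 - R)⁻¹ b i ≤ (1 - R)⁻¹ a i :=
  calc R a b * (1 - R)⁻¹ b i ≤ ∑ k, R a k * (1 - R)⁻¹ k i :=
        Finset.single_le_sum (fun k _ => hR.mul_inv_one_sub_apply_nonneg hout a k i)
          (Finset.mem_univ b)
    _ ≤ (1 : Matrix ι ι 𝕜) a i + ∑ k, R a k * (1 - R)⁻¹ k i :=
        le_add_of_nonneg_left (zero_le_one_elem a i)
    _ = (1 - R)⁻¹ a i :=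
        (inv_one_sub_apply (hR.isUnit_det_one_sub hout) a i).symm

theorem one_le_inv_one_sub_apply_self (hR : R.IsSubstochastic) (hout : R.IsOutflowConnected)
    (i : ι) : 1 ≤ (1 - R)⁻¹ i i := by
  rw [inv_one_sub_apply (hR.isUnit_det_one_sub hout), one_apply_eq]
  exact le_add_of_nonneg_right
    (Finset.sum_nonneg fun k _ => hR.mul_inv_one_sub_apply_nonneg hout i k i)

theorem inv_one_sub_apply_pos_of_reflTransGen (hR : R.IsSubstochastic) (hout : R.IsOutflowConnected)
    {h i : ι} (hpath : ReflTransGen (fun a b => 0 < R a b) h i) : 0 < (1 - R)⁻¹ h i := by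
  induction hpath using ReflTransGen.head_induction_on with
  | refl => exact one_pos.trans_le (hR.one_le_inv_one_sub_apply_self hout i)
  | head hab _ ih => exact (mul_pos hab ih).trans_le (hR.mul_le_inv_one_sub_apply hout _ _ i)

end IsSubstochastic

end Matrix

/-- For a substochastic, outflow-connected matrix `R` and a nonnegative vector `u`,
if an index `i` satisfies `u i > 0` or is reachable by a directed path (in the digraph with an
edge `(j,k)` whenever `R j k > 0`) from some index `h` with `u h > 0`, then the `i`-th entry of
`z* = (I − Rᵀ)⁻¹ u` is strictly positive. -/
theorem inflow_connected_equilibrium_entry_pos {n : ℕ}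
    (R : Matrix (Fin n) (Fin n) ℝ)
    (hnn : ∀ i j, 0 ≤ R i j)
    (hsub : ∀ i, ∑ j, R i j ≤ 1)
    (hout : ∀ i : Fin n, ∃ j : Fin n,
      Relation.ReflTransGen (fun a b => 0 < R a b) i j ∧ ∑ k, R j k < 1)
    (u : Fin n → ℝ) (hu : ∀ i, 0 ≤ u i)
    (i : Fin n)
    (hi : 0 < u i ∨ ∃ h : Fin n, 0 < u h ∧
      Relation.TransGen (fun a b => 0 < R a b) h i) :
    0 < (1 - Rᵀ)⁻¹.mulVec u i := by
  have hR : R.IsSubstochastic := ⟨hnn, hsub⟩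
  obtain ⟨h, hu_h, hpath⟩ : ∃ h, 0 < u h ∧ ReflTransGen (fun a b => 0 < R a b) h i :=
    hi.elim (fun hu_i => ⟨i, hu_i, .refl⟩) fun ⟨h, hu_h, hpath⟩ => ⟨h, hu_h, hpath.to_reflTransGen⟩
  have hT : (1 - Rᵀ)⁻¹ = ((1 - R)⁻¹)ᵀ := by
    rw [transpose_nonsing_inv, transpose_sub, transpose_one]
  rw [hT, mulVec_transpose]
  exact Finset.sum_pos' (fun k _ => mul_nonneg (hu k) (hR.inv_one_sub_apply_nonneg hout k i))
    ⟨h, Finset.mem_univ h, mul_pos hu_h (hR.inv_one_sub_apply_pos_of_reflTransGen hout hpath)⟩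
end

section
/- Let D ⊆ ℝⁿ be open and convex, and let f : D → ℝⁿ be continuously differentiable such that for every x ∈ D the transpose of the Jacobian of f at x is a compartmental matrix, i.e., ∂f_i/∂x_j(x) ≥ 0 for all i ≠ j and Σ_{i=1}^n ∂f_i/∂x_j(x) ≤ 0 for all j. Let u : [0,∞) → ℝⁿ be any function and let x, x̃ : [0,∞) → D be differentiable with ẋ(t) = u(t) + f(x(t)) and ẋ̃(t) = u(t) + f(x̃(t)) for all t ≥ 0. Then the l1-distance t ↦ Σ_{i=1}^n |x_i(t) − x̃_i(t)| is non-increasing on [0,∞). -/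
/-! By the mean value theorem on the segment `[b, a] ⊆ D`, pairing `f a - f b` with a sign vector
`σ` of `e = a - b` (`σᵢ eᵢ = |eᵢ|`, `|σᵢ| ≤ 1`) gives `σ ⬝ᵥ J e` for the Jacobian `J` at some point
of the segment, and
`σ ⬝ᵥ J e = ∑ⱼ eⱼ (σⱼ Jⱼⱼ + ∑_{i ≠ j} σᵢ Jᵢⱼ) ≤ ∑ⱼ |eⱼ| ∑ᵢ Jᵢⱼ ≤ 0`.
The right derivative of `|xᵢ - yᵢ|` is `σᵢ (f x - f y)ᵢ` for such a sign vector (at a zero of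
`xᵢ - yᵢ` take `σᵢ` to be the sign of the derivative), so the `ℓ¹`-distance has nonpositive right
derivative everywhere and is therefore antitone. -/

open Matrix

theorem SignType.abs_coe_le_one {α : Type*} [Ring α] [LinearOrder α] [IsOrderedRing α]
    (a : SignType) : |(a : α)| ≤ 1 := by
  cases a <;> simp

theorem HasDerivAt.hasDerivWithinAt_abs_Ici_of_eq_zero {w : ℝ → ℝ} {d t : ℝ}
    (hw : HasDerivAt w d t) (h0 : w t = 0) :
    HasDerivWithinAt (fun s => |w s|) |d| (Set.Ici t) t := by
  rw [hasDerivWithinAt_iff_isLittleO]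
  refine Asymptotics.IsBigO.trans_isLittleO (.of_bound' ?_)
    (hasDerivWithinAt_iff_isLittleO.1 hw.hasDerivWithinAt)
  filter_upwards [self_mem_nhdsWithin] with s (hs : t ≤ s)
  have habs : (s - t) * |d| = |(s - t) * d| := by rw [abs_mul, abs_of_nonneg (sub_nonneg.2 hs)]
  simp only [h0, abs_zero, sub_zero, smul_eq_mul, Real.norm_eq_abs, habs]
  exact abs_abs_sub_abs_le _ _

theorem HasDerivAt.exists_hasDerivWithinAt_abs_Ici {w : ℝ → ℝ} {d t : ℝ} (hw : HasDerivAt w d t) :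
    ∃ σ : ℝ, |σ| ≤ 1 ∧ σ * w t = |w t| ∧
      HasDerivWithinAt (fun s => |w s|) (σ * d) (Set.Ici t) t := by
  by_cases h0 : w t = 0
  · refine ⟨SignType.sign d, SignType.abs_coe_le_one _, by simp [h0], ?_⟩
    rw [sign_mul_self]
    exact hw.hasDerivWithinAt_abs_Ici_of_eq_zero h0
  · exact ⟨SignType.sign (w t), SignType.abs_coe_le_one _, sign_mul_self _,
      ((hasDerivAt_abs h0).comp t hw).hasDerivWithinAt⟩

theorem Matrix.dotProduct_mulVec_nonpos {ι : Type*} [Fintype ι] {A : Matrix ι ι ℝ}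
    (hoff : ∀ i j, i ≠ j → 0 ≤ A i j) (hcol : ∀ j, ∑ i, A i j ≤ 0) {σ e : ι → ℝ}
    (hσ : ∀ i, |σ i| ≤ 1) (hσe : ∀ i, σ i * e i = |e i|) : σ ⬝ᵥ (A *ᵥ e) ≤ 0 := by
  have hterm : ∀ i j, σ i * A i j * e j ≤ |e j| * A i j := by
    intro i j
    rcases eq_or_ne i j with rfl | hij
    · exact le_of_eq (by rw [← hσe i]; ring)
    · have hσej : σ i * e j ≤ |e j| := (le_abs_self _).trans <| by
        rw [abs_mul]; exact mul_le_of_le_one_left (abs_nonneg _) (hσ i)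
      calc σ i * A i j * e j = A i j * (σ i * e j) := by ring
        _ ≤ A i j * |e j| := mul_le_mul_of_nonneg_left hσej (hoff i j hij)
        _ = |e j| * A i j := mul_comm _ _
  calc σ ⬝ᵥ (A *ᵥ e) = ∑ j, ∑ i, σ i * A i j * e j := by
        rw [dotProduct_mulVec]; simp only [dotProduct, vecMul, Finset.sum_mul]
    _ ≤ ∑ j, |e j| * ∑ i, A i j := by
        gcongr with j
        rw [Finset.mul_sum]
        exact Finset.sum_le_sum fun i _ => hterm i j
    _ ≤ 0 := Finset.sum_nonpos fun j _ => mul_nonpos_of_nonneg_of_nonpos (abs_nonneg _) (hcol j)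

theorem Convex.dotProduct_sub_nonpos_of_fderiv {ι : Type*} [Fintype ι] [DecidableEq ι]
    {D : Set (ι → ℝ)} (hD : Convex ℝ D) {f : (ι → ℝ) → ι → ℝ}
    (hf : ∀ x ∈ D, DifferentiableAt ℝ f x)
    (hoff : ∀ x ∈ D, ∀ i j, i ≠ j → 0 ≤ fderiv ℝ f x (Pi.single j 1) i)
    (hcol : ∀ x ∈ D, ∀ j, ∑ i, fderiv ℝ f x (Pi.single j 1) i ≤ 0)
    {a b : ι → ℝ} (ha : a ∈ D) (hb : b ∈ D) {σ : ι → ℝ} (hσ : ∀ i, |σ i| ≤ 1)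
    (hσe : ∀ i, σ i * (a i - b i) = |a i - b i|) :
    σ ⬝ᵥ (f a - f b) ≤ 0 := by
  obtain ⟨z, hz, hmvt⟩ := domain_mvt (f := fun x => σ ⬝ᵥ f x)
    (f' := fun z => ∑ i, σ i • (ContinuousLinearMap.proj i).comp (fderiv ℝ f z))
    (fun z hz => (HasFDerivAt.fun_sum fun i _ => ((hasFDerivAt_apply i (f z)).comp z
      (hf z hz).hasFDerivAt).const_mul (σ i)).hasFDerivWithinAt)
    hD hb ha
  have hzD := hD.segment_subset hb ha hz
  rw [dotProduct_sub, hmvt]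
  have hJ := dotProduct_mulVec_nonpos (e := a - b)
    (A := LinearMap.toMatrix' (fderiv ℝ f z : (ι → ℝ) →ₗ[ℝ] ι → ℝ))
    (by simpa using hoff z hzD) (by simpa using hcol z hzD) hσ hσe
  rw [LinearMap.toMatrix'_mulVec] at hJ
  simpa [dotProduct] using hJ

theorem Convex.antitoneOn_of_hasDerivWithinAt_Ici_nonpos {D : Set ℝ} (hD : Convex ℝ D)
    {V : ℝ → ℝ} (hV : ContinuousOn V D)
    (hV' : ∀ t ∈ D, ∃ d ≤ 0, HasDerivWithinAt V d (Set.Ici t) t) : AntitoneOn V D := by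
  choose! d hd hderiv using hV'
  intro p hp q hq hpq
  have hIcc : Set.Icc p q ⊆ D := hD.ordConnected.out hp hq
  have hIco : Set.Ico p q ⊆ D := Set.Ico_subset_Icc_self.trans hIcc
  exact image_le_of_deriv_right_le_deriv_boundary (B := fun _ => V p) (hV.mono hIcc)
    (fun t ht => hderiv t (hIco ht)) le_rfl continuousOn_const
    (fun t _ => hasDerivWithinAt_const t _ (V p)) (fun t ht => hd t (hIco ht)) ⟨hpq, le_rfl⟩

/-- If `f` is continuously differentiable on an open convex set `D` with
compartmental transposed Jacobian everywhere on `D`, then the `l1`-distance between any two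
solutions of the monotone dynamical flow network `ẋ = u(t) + f(x)` staying in `D` is
non-increasing on `[0,∞)`. -/
theorem monotone_flow_network_l1_nonexpansive {n : ℕ}
    (D : Set (Fin n → ℝ)) (hDopen : IsOpen D) (hDconv : Convex ℝ D)
    (f : (Fin n → ℝ) → (Fin n → ℝ))
    (hf : ContDiffOn ℝ 1 f D)
    (hMetzler : ∀ x ∈ D, ∀ i j, i ≠ j → 0 ≤ fderiv ℝ f x (Pi.single j 1) i)
    (hcol : ∀ x ∈ D, ∀ j, ∑ i, fderiv ℝ f x (Pi.single j 1) i ≤ 0)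
    (u x y : ℝ → Fin n → ℝ)
    (hxD : ∀ t ≥ (0 : ℝ), x t ∈ D) (hyD : ∀ t ≥ (0 : ℝ), y t ∈ D)
    (hx : ∀ t ≥ (0 : ℝ), HasDerivAt x (u t + f (x t)) t)
    (hy : ∀ t ≥ (0 : ℝ), HasDerivAt y (u t + f (y t)) t) :
    AntitoneOn (fun t => ∑ i, |x t i - y t i|) (Set.Ici 0) := by
  have hfD : ∀ z ∈ D, DifferentiableAt ℝ f z := fun z hz =>
    (hf.differentiableOn one_ne_zero).differentiableAt (hDopen.mem_nhds hz)
  have hdiff : ∀ t ≥ (0 : ℝ), ∀ i,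
      HasDerivAt (fun s => x s i - y s i) (f (x t) i - f (y t) i) t := fun t ht i => by
    simpa using hasDerivAt_pi.1 ((hx t ht).sub (hy t ht)) i
  refine (convex_Ici 0).antitoneOn_of_hasDerivWithinAt_Ici_nonpos
    (continuousOn_finsetSum _ fun i _ t ht =>
      (hdiff t ht i).continuousAt.abs.continuousWithinAt) fun t ht => ?_
  choose σ hσ hσe hderiv using fun i => (hdiff t ht i).exists_hasDerivWithinAt_abs_Ici
  exact ⟨σ ⬝ᵥ (f (x t) - f (y t)),
    hDconv.dotProduct_sub_nonpos_of_fderiv hfD hMetzler hcol (hxD t ht) (hyD t ht) hσ hσe,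
    HasDerivWithinAt.fun_sum fun i _ => hderiv i⟩
end

section
/- Let D ⊆ ℝⁿ be open and convex, let f : D → ℝⁿ be continuously differentiable such that for every x ∈ D the transpose of the Jacobian of f at x is a compartmental matrix (∂f_i/∂x_j(x) ≥ 0 for all i ≠ j and Σ_{i=1}^n ∂f_i/∂x_j(x) ≤ 0 for all j), let u ∈ ℝⁿ be constant, and let x* ∈ D be an equilibrium, i.e., u + f(x*) = 0. Then every differentiable solution x : [0,∞) → D of ẋ(t) = u + f(x(t)) satisfies Σ_{i=1}^n |x_i(t) − x*_i| ≤ Σ_{i=1}^n |x_i(0) − x*_i| for all t ≥ 0; in particular, the equilibrium x* is Lyapunov stable. -/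
/-!
Along a solution, `V(t) = ∑ᵢ |xᵢ(t) - yᵢ(t)|` has right derivative `⟪ε, f(x(t)) - f(y(t))⟫` for
some subgradient `ε` of the `ℓ¹` norm at `v = x(t) - y(t)` (on coordinates where `vᵢ = 0` take
`εᵢ = sign(v̇ᵢ)`). By the mean value inequality along the segment from `y(t)` to `x(t)`, this is
bounded by some `⟪ε, J v⟫` with `J` a Jacobian of `f`, and
`⟪ε, J v⟫ = ∑ⱼ ∑ᵢ Jᵢⱼ εᵢ vⱼ ≤ ∑ⱼ |vⱼ| ∑ᵢ Jᵢⱼ ≤ 0`, since `εⱼ vⱼ = |vⱼ|`, `|εᵢ| ≤ 1`, the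
off-diagonal entries of `J` are nonnegative and its column sums nonpositive. Hence `V` is
nonincreasing; the equilibrium is the constant solution `y ≡ x*`.
-/

open Matrix Set

variable {ι : Type*}

def IsL1Subgradient (ε v : ι → ℝ) : Prop :=
  ∀ i, ε i * v i = |v i| ∧ |ε i| ≤ 1

variable [Fintype ι]

def Matrix.IsCompartmental (M : Matrix ι ι ℝ) : Prop :=
  (∀ i j, i ≠ j → 0 ≤ M i j) ∧ ∀ i, ∑ j, M i j ≤ 0

theorem Matrix.dotProduct_mulVec_nonpos_of_isCompartmental_transpose {M : Matrix ι ι ℝ}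
    (hM : Mᵀ.IsCompartmental) {ε v : ι → ℝ} (hε : IsL1Subgradient ε v) :
    ε ⬝ᵥ (M *ᵥ v) ≤ 0 := by
  have hterm : ∀ i j, M i j * (ε i * v j) ≤ M i j * |v j| := by
    intro i j
    rcases eq_or_ne i j with rfl | hij
    · rw [(hε i).1]
    · refine mul_le_mul_of_nonneg_left ?_ (hM.1 j i hij.symm)
      calc ε i * v j ≤ |ε i| * |v j| := abs_mul (ε i) (v j) ▸ le_abs_self _
        _ ≤ |v j| := mul_le_of_le_one_left (abs_nonneg _) (hε i).2
  calc ε ⬝ᵥ (M *ᵥ v) = ∑ j, ∑ i, M i j * (ε i * v j) := by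
        simp only [dotProduct, mulVec, Finset.mul_sum]
        rw [Finset.sum_comm]
        exact Finset.sum_congr rfl fun _ _ => Finset.sum_congr rfl fun _ _ => by ring
    _ ≤ ∑ j, ∑ i, M i j * |v j| :=
        Finset.sum_le_sum fun j _ => Finset.sum_le_sum fun i _ => hterm i j
    _ = ∑ j, (∑ i, M i j) * |v j| := by simp only [Finset.sum_mul]
    _ ≤ 0 := Finset.sum_nonpos fun j _ => mul_nonpos_of_nonpos_of_nonneg (hM.2 j) (abs_nonneg _)

def IsL1Dissipative (D : Set (ι → ℝ)) (F : (ι → ℝ) → ι → ℝ) : Prop :=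
  ∀ a ∈ D, ∀ b ∈ D, ∀ ε, IsL1Subgradient ε (b - a) → ε ⬝ᵥ (F b - F a) ≤ 0

theorem Convex.isL1Dissipative_of_isCompartmental [DecidableEq ι] {D : Set (ι → ℝ)}
    (hD : Convex ℝ D) {f : (ι → ℝ) → ι → ℝ} (hf : ∀ y ∈ D, DifferentiableAt ℝ f y)
    (hJ : ∀ y ∈ D, (LinearMap.toMatrix' (fderiv ℝ f y : (ι → ℝ) →ₗ[ℝ] ι → ℝ))ᵀ.IsCompartmental) :
    IsL1Dissipative D f := by
  intro a ha b hb ε hε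
  set γ := AffineMap.lineMap (k := ℝ) a b
  have hγD : ∀ s ∈ Icc (0 : ℝ) 1, γ s ∈ D := fun s hs => hD.lineMap_mem ha hb hs
  have hφ : ∀ s ∈ Icc (0 : ℝ) 1,
      HasDerivAt (fun s => ε ⬝ᵥ f (γ s)) (ε ⬝ᵥ fderiv ℝ f (γ s) (b - a)) s := by
    intro s hs
    have h := (hf _ (hγD s hs)).hasFDerivAt.comp_hasDerivAt s AffineMap.hasDerivAt_lineMap
    exact HasDerivAt.fun_sum fun i _ => (hasDerivAt_pi.1 h i).const_mul (ε i)
  have hanti : AntitoneOn (fun s => ε ⬝ᵥ f (γ s)) (Icc 0 1) :=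
    antitoneOn_of_hasDerivWithinAt_nonpos (convex_Icc 0 1)
      (fun s hs => (hφ s hs).continuousAt.continuousWithinAt)
      (fun s hs => (hφ s (interior_subset hs)).hasDerivWithinAt)
      (fun s hs => by
        rw [← ContinuousLinearMap.coe_coe, ← LinearMap.toMatrix'_mulVec]
        exact dotProduct_mulVec_nonpos_of_isCompartmental_transpose
          (hJ _ (hγD s (interior_subset hs))) hε)
  have h01 := hanti (left_mem_Icc.2 zero_le_one) (right_mem_Icc.2 zero_le_one) zero_le_one
  simp only [γ, AffineMap.lineMap_apply_zero, AffineMap.lineMap_apply_one] at h01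
  rw [dotProduct_sub]
  linarith

theorem HasDerivAt.exists_hasDerivWithinAt_Ici_abs {g : ℝ → ℝ} {w s : ℝ} (hg : HasDerivAt g w s) :
    ∃ ε : ℝ, (ε * g s = |g s| ∧ |ε| ≤ 1) ∧
      HasDerivWithinAt (fun t => |g t|) (ε * w) (Ici s) s := by
  have abs_sign_le_one : ∀ a : ℝ, |(SignType.sign a : ℝ)| ≤ 1 := fun a => by
    rcases lt_trichotomy a 0 with h | h | h <;> simp [h]
  by_cases h0 : g s = 0
  · refine ⟨SignType.sign w, ⟨by simp [h0], abs_sign_le_one w⟩, ?_⟩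
    rw [sign_mul_self, ← hasDerivWithinAt_Ioi_iff_Ici,
      hasDerivWithinAt_iff_tendsto_slope' (s := Ioi s) (lt_irrefl s)]
    have hslope := (hasDerivWithinAt_iff_tendsto_slope' (s := Ioi s) (lt_irrefl s)).1
      (hg.hasDerivWithinAt (s := Ioi s))
    refine hslope.abs.congr' ?_
    filter_upwards [self_mem_nhdsWithin] with t ht
    rw [slope_def_field, slope_def_field, h0, abs_zero, sub_zero, sub_zero, abs_div,
      abs_of_pos (sub_pos.2 ht)]
  · exact ⟨SignType.sign (g s), ⟨sign_mul_self _, abs_sign_le_one _⟩,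
      ((hasDerivAt_abs h0).comp s hg).hasDerivWithinAt⟩

theorem HasDerivAt.exists_hasDerivWithinAt_Ici_sum_abs {y : ℝ → ι → ℝ} {w : ι → ℝ} {s : ℝ}
    (hy : HasDerivAt y w s) :
    ∃ ε, IsL1Subgradient ε (y s) ∧
      HasDerivWithinAt (fun t => ∑ i, |y t i|) (ε ⬝ᵥ w) (Ici s) s := by
  choose ε hε hderiv using fun i => (hasDerivAt_pi.1 hy i).exists_hasDerivWithinAt_Ici_abs
  exact ⟨ε, hε, HasDerivWithinAt.fun_sum fun i _ => hderiv i⟩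

theorem image_le_of_exists_deriv_right_nonpos {g : ℝ → ℝ} {a b : ℝ}
    (hg : ContinuousOn g (Icc a b))
    (hg' : ∀ x ∈ Ico a b, ∃ d ≤ 0, HasDerivWithinAt g d (Ici x) x) :
    ∀ ⦃x⦄, x ∈ Icc a b → g x ≤ g a := by
  choose! g' hg'_nonpos hg'_deriv using hg'
  exact image_le_of_deriv_right_le_deriv_boundary hg hg'_deriv le_rfl continuousOn_const
    (fun x _ => hasDerivWithinAt_const x _ (g a)) hg'_nonpos

theorem IsL1Dissipative.sum_abs_sub_le {D : Set (ι → ℝ)} {F : (ι → ℝ) → ι → ℝ}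
    (hF : IsL1Dissipative D F) {x y : ℝ → ι → ℝ}
    (hxD : ∀ t ≥ (0 : ℝ), x t ∈ D) (hyD : ∀ t ≥ (0 : ℝ), y t ∈ D)
    (hx : ∀ t ≥ (0 : ℝ), HasDerivAt x (F (x t)) t) (hy : ∀ t ≥ (0 : ℝ), HasDerivAt y (F (y t)) t)
    {t : ℝ} (ht : 0 ≤ t) :
    ∑ i, |x t i - y t i| ≤ ∑ i, |x 0 i - y 0 i| := by
  have hd : ∀ s ≥ (0 : ℝ), HasDerivAt (x - y) (F (x s) - F (y s)) s :=
    fun s hs => (hx s hs).sub (hy s hs)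
  refine image_le_of_exists_deriv_right_nonpos (g := fun t => ∑ i, |(x - y) t i|)
    (fun s hs => ?_) (fun s hs => ?_) ⟨ht, le_rfl⟩
  · exact ContinuousAt.continuousWithinAt <| tendsto_finsetSum _ fun i _ =>
      ((continuous_apply i).continuousAt.comp (hd s hs.1).continuousAt).abs
  · obtain ⟨ε, hε, hderiv⟩ := (hd s hs.1).exists_hasDerivWithinAt_Ici_sum_abs
    exact ⟨_, hF _ (hyD s hs.1) _ (hxD s hs.1) ε hε, hderiv⟩

/-- If `f` is continuously differentiable on an open convex set `D` with
compartmental transposed Jacobian everywhere on `D`, `u` is a constant inflow and `x* ∈ D` is an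
equilibrium (`u + f(x*) = 0`), then every solution of `ẋ = u + f(x)` staying in `D` satisfies
`Σ_i |x_i(t) − x*_i| ≤ Σ_i |x_i(0) − x*_i|` for all `t ≥ 0`; in particular `x*` is Lyapunov
stable (in the `l1`-norm). -/
theorem monotone_flow_network_equilibrium_stable {n : ℕ}
    (D : Set (Fin n → ℝ)) (hDopen : IsOpen D) (hDconv : Convex ℝ D)
    (f : (Fin n → ℝ) → (Fin n → ℝ))
    (hf : ContDiffOn ℝ 1 f D)
    (hMetzler : ∀ x ∈ D, ∀ i j, i ≠ j → 0 ≤ fderiv ℝ f x (Pi.single j 1) i)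
    (hcol : ∀ x ∈ D, ∀ j, ∑ i, fderiv ℝ f x (Pi.single j 1) i ≤ 0)
    (u : Fin n → ℝ) (xstar : Fin n → ℝ) (hxstarD : xstar ∈ D)
    (heq : u + f xstar = 0) :
    (∀ x : ℝ → Fin n → ℝ, (∀ t ≥ (0 : ℝ), x t ∈ D) →
      (∀ t ≥ (0 : ℝ), HasDerivAt x (u + f (x t)) t) →
      ∀ t ≥ (0 : ℝ), ∑ i, |x t i - xstar i| ≤ ∑ i, |x 0 i - xstar i|) ∧
    (∀ ε > (0 : ℝ), ∃ δ > (0 : ℝ), ∀ x : ℝ → Fin n → ℝ, (∀ t ≥ (0 : ℝ), x t ∈ D) →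
      (∀ t ≥ (0 : ℝ), HasDerivAt x (u + f (x t)) t) →
      ∑ i, |x 0 i - xstar i| < δ → ∀ t ≥ (0 : ℝ), ∑ i, |x t i - xstar i| < ε) := by
  have hdiss : IsL1Dissipative D f :=
    hDconv.isL1Dissipative_of_isCompartmental
      (fun y hy => (hf.differentiableOn one_ne_zero).differentiableAt (hDopen.mem_nhds hy))
      (fun y hy => ⟨fun i j hij => hMetzler y hy j i hij.symm, hcol y hy⟩)
  have hflow : IsL1Dissipative D (fun y => u + f y) := by
    simpa only [IsL1Dissipative, add_sub_add_left_eq_sub] using hdiss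
  have hcontract : ∀ x : ℝ → Fin n → ℝ, (∀ t ≥ (0 : ℝ), x t ∈ D) →
      (∀ t ≥ (0 : ℝ), HasDerivAt x (u + f (x t)) t) →
      ∀ t ≥ (0 : ℝ), ∑ i, |x t i - xstar i| ≤ ∑ i, |x 0 i - xstar i| :=
    fun x hxD hx t ht => hflow.sum_abs_sub_le (y := fun _ => xstar) hxD (fun _ _ => hxstarD) hx
      (fun s _ => heq ▸ hasDerivAt_const s xstar) ht
  exact ⟨hcontract, fun ε hε => ⟨ε, hε, fun x hxD hx h0 t ht =>
    (hcontract x hxD hx t ht).trans_lt h0⟩⟩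
end

section
/- Let D ⊆ ℝⁿ be open and convex and let f : D → ℝⁿ be continuously differentiable with a Metzler Jacobian on D, i.e., ∂f_i/∂x_j(x) ≥ 0 for all i ≠ j and all x ∈ D. Let u, ũ : [0,∞) → ℝⁿ be continuous with u(t) ≤ ũ(t) entrywise for all t, and let x, x̃ : [0,∞) → D be differentiable with ẋ(t) = u(t) + f(x(t)) and ẋ̃(t) = ũ(t) + f(x̃(t)). If x(0) ≤ x̃(0) entrywise, then x(t) ≤ x̃(t) entrywise for all t ≥ 0. -/
/-! The function `V t = ∑ i, ((x t - y t) i)⁺ ^ 2`, the squared distance of `x t - y t` from the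
nonpositive orthant, vanishes at `t = 0` and satisfies `V' ≤ C V`. Indeed, the inputs contribute
`∑ i, (x i - y i)⁺ (u i - v i) ≤ 0`, and by the mean value theorem along the segment from `y t`
to `x t` the Metzler sign condition bounds `(x i - y i)⁺ ∂ⱼfᵢ (x j - y j)` by
`∂ⱼfᵢ (x i - y i)⁺ (x j - y j)⁺` for `j ≠ i`, with a bound on the Jacobian that is uniform on the
compact union of these segments for `t ∈ [0, T]`. Grönwall's inequality then forces `V = 0`. -/

open Set Filter Topology

theorem posPart_mul_self_eq_sq (a : ℝ) : a⁺ * a = a⁺ ^ 2 := by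
  rcases le_total a 0 with h | h
  · simp [posPart_eq_zero.2 h]
  · rw [posPart_eq_self.2 h, sq]

theorem hasDerivAt_posPart_sq (r : ℝ) : HasDerivAt (fun s : ℝ => s⁺ ^ 2) (2 * r⁺) r := by
  rcases lt_trichotomy r 0 with h | rfl | h
  · have : (fun s : ℝ => s⁺ ^ 2) =ᶠ[𝓝 r] fun _ => 0 := by
      filter_upwards [eventually_lt_nhds h] with s hs
      simp [posPart_eq_zero.2 hs.le]
    simpa [posPart_eq_zero.2 h.le] using (hasDerivAt_const r (0 : ℝ)).congr_of_eventuallyEq this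
  · -- `s⁺ ^ 2 = O(s ^ 2) = o(s)` at the kink
    rw [hasDerivAt_iff_isLittleO]
    simp only [posPart_zero, zero_pow two_ne_zero, mul_zero, smul_zero, sub_zero]
    refine Asymptotics.IsBigO.trans_isLittleO ?_ (Asymptotics.isLittleO_pow_id one_lt_two)
    refine Asymptotics.IsBigO.of_bound 1 (Eventually.of_forall fun s => ?_)
    simp only [Real.norm_eq_abs, one_mul, abs_pow]
    rcases le_total s 0 with hs | hs
    · simp [posPart_eq_zero.2 hs, sq_nonneg]
    · rw [posPart_eq_self.2 hs]
  · have : (fun s : ℝ => s⁺ ^ 2) =ᶠ[𝓝 r] fun s => s ^ 2 := by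
      filter_upwards [eventually_gt_nhds h] with s hs
      rw [posPart_eq_self.2 hs.le]
    rw [posPart_eq_self.2 h.le]
    simpa using (hasDerivAt_pow 2 r).congr_of_eventuallyEq this

section Orthant

variable {ι : Type*} [Fintype ι]

theorem HasDerivAt.sum_posPart_sq {w : ℝ → ι → ℝ} {w' : ι → ℝ} {t : ℝ}
    (hw : HasDerivAt w w' t) :
    HasDerivAt (fun τ => ∑ i, (w τ i)⁺ ^ 2) (∑ i, 2 * (w t i)⁺ * w' i) t :=
  HasDerivAt.fun_sum fun i _ => (hasDerivAt_posPart_sq _).comp t (hasDerivAt_pi.1 hw i)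

theorem sum_posPart_sq_eq_zero_iff (w : ι → ℝ) : ∑ i, (w i)⁺ ^ 2 = 0 ↔ ∀ i, w i ≤ 0 := by
  simp [Finset.sum_eq_zero_iff_of_nonneg fun i _ => sq_nonneg (w i)⁺, posPart_eq_zero]

theorem sum_two_mul_posPart_mul_sub_le {w u v p q : ι → ℝ} (huv : ∀ i, u i ≤ v i) :
    ∑ i, 2 * (w i)⁺ * ((u i + p i) - (v i + q i)) ≤ 2 * ∑ i, (w i)⁺ * (p i - q i) := by
  rw [Finset.mul_sum]
  refine Finset.sum_le_sum fun i _ => ?_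
  have := mul_nonpos_of_nonneg_of_nonpos (posPart_nonneg (w i)) (sub_nonpos.2 (huv i))
  linarith

end Orthant

theorem nonpos_of_hasDerivWithinAt_le_mul {V V' : ℝ → ℝ} {K a b : ℝ}
    (hV : ContinuousOn V (Icc a b)) (hV' : ∀ t ∈ Ico a b, HasDerivWithinAt V (V' t) (Ici t) t)
    (bound : ∀ t ∈ Ico a b, V' t ≤ K * V t) (ha : V a ≤ 0) :
    ∀ t ∈ Icc a b, V t ≤ 0 := by
  intro t ht
  simpa [gronwallBound_ε0_δ0] using le_gronwallBound_of_liminf_deriv_right_le hV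
    (fun t ht _ hr => (hV' t ht).liminf_right_slope_le hr) ha (ε := 0) (by simpa using bound) t ht

theorem exists_forall_mem_segment_norm_le {E F : Type*} [NormedAddCommGroup E] [NormedSpace ℝ E]
    [SeminormedAddGroup F] {D : Set E} (hD : Convex ℝ D) {g : E → F} (hg : ContinuousOn g D)
    {x y : ℝ → E} {a b : ℝ} (hx : ContinuousOn x (Icc a b)) (hy : ContinuousOn y (Icc a b))
    (hxD : ∀ t ∈ Icc a b, x t ∈ D) (hyD : ∀ t ∈ Icc a b, y t ∈ D) :
    ∃ M, ∀ t ∈ Icc a b, ∀ z ∈ segment ℝ (y t) (x t), ‖g z‖ ≤ M := by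
  set γ : ℝ × ℝ → E := fun p => y p.1 + p.2 • (x p.1 - y p.1)
  have hγ : ContinuousOn γ (Icc a b ×ˢ Icc 0 1) :=
    (hy.comp continuousOn_fst fun _ hp => hp.1).add <| continuousOn_snd.smul <|
      (hx.comp continuousOn_fst fun _ hp => hp.1).sub (hy.comp continuousOn_fst fun _ hp => hp.1)
  have hsegment : ∀ t ∈ Icc a b, segment ℝ (y t) (x t) ⊆ γ '' (Icc a b ×ˢ Icc 0 1) := by
    rintro t ht _ hz
    rw [segment_eq_image'] at hz
    obtain ⟨s, hs, rfl⟩ := hz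
    exact ⟨(t, s), ⟨ht, hs⟩, rfl⟩
  have hK : γ '' (Icc a b ×ˢ Icc 0 1) ⊆ D := by
    rintro _ ⟨⟨t, s⟩, ⟨ht, hs⟩, rfl⟩
    exact hD.segment_subset (hyD t ht) (hxD t ht)
      (segment_eq_image' ℝ (y t) (x t) ▸ mem_image_of_mem _ hs)
  obtain ⟨M, hM⟩ := ((isCompact_Icc.prod isCompact_Icc).image_of_continuousOn hγ
    ).exists_bound_of_continuousOn (hg.mono hK)
  exact ⟨M, fun t ht z hz => hM z (hsegment t ht hz)⟩

section Metzler

variable {ι : Type*} [Fintype ι] [DecidableEq ι]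

namespace ContinuousLinearMap

def IsMetzler (A : (ι → ℝ) →L[ℝ] (ι → ℝ)) : Prop :=
  ∀ i j, i ≠ j → 0 ≤ A (Pi.single j 1) i

theorem apply_eq_sum_apply_single (A : (ι → ℝ) →L[ℝ] (ι → ℝ)) (w : ι → ℝ) (i : ι) :
    A w i = ∑ j, A (Pi.single j 1) i * w j := by
  conv_lhs => rw [← Finset.univ_sum_single w]
  simp only [map_sum, Finset.sum_apply]
  refine Finset.sum_congr rfl fun j _ => ?_
  rw [mul_comm, ← smul_eq_mul, ← Pi.smul_apply, ← map_smul, ← Pi.single_smul, smul_eq_mul, mul_one]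

theorem apply_single_apply_le_opNorm (A : (ι → ℝ) →L[ℝ] (ι → ℝ)) (i j : ι) :
    A (Pi.single j 1) i ≤ ‖A‖ :=
  calc A (Pi.single j 1) i ≤ ‖A (Pi.single j 1)‖ :=
        (Real.le_norm_self _).trans (norm_le_pi_norm _ i)
    _ ≤ ‖A‖ * ‖(Pi.single j 1 : ι → ℝ)‖ := A.le_opNorm _
    _ = ‖A‖ := by rw [Pi.norm_single, norm_one, mul_one]

theorem IsMetzler.sum_posPart_mul_apply_le {A : (ι → ℝ) →L[ℝ] (ι → ℝ)} (hA : A.IsMetzler)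
    (w : ι → ℝ) : ∑ i, (w i)⁺ * A w i ≤ Fintype.card ι * ‖A‖ * ∑ i, (w i)⁺ ^ 2 := by
  have hterm : ∀ i j, (w i)⁺ * (A (Pi.single j 1) i * w j) ≤ ‖A‖ * ((w i)⁺ * (w j)⁺) := by
    intro i j
    have hpos : A (Pi.single j 1) i * ((w i)⁺ * w j)
        ≤ A (Pi.single j 1) i * ((w i)⁺ * (w j)⁺) := by
      rcases eq_or_ne i j with rfl | hij
      · rw [posPart_mul_self_eq_sq, sq]
      · exact mul_le_mul_of_nonneg_left
          (mul_le_mul_of_nonneg_left (le_posPart _) (posPart_nonneg _)) (hA i j hij)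
    calc (w i)⁺ * (A (Pi.single j 1) i * w j) = A (Pi.single j 1) i * ((w i)⁺ * w j) := by ring
      _ ≤ A (Pi.single j 1) i * ((w i)⁺ * (w j)⁺) := hpos
      _ ≤ ‖A‖ * ((w i)⁺ * (w j)⁺) := mul_le_mul_of_nonneg_right
          (A.apply_single_apply_le_opNorm i j) (mul_nonneg (posPart_nonneg _) (posPart_nonneg _))
  calc ∑ i, (w i)⁺ * A w i = ∑ i, ∑ j, (w i)⁺ * (A (Pi.single j 1) i * w j) := by
        simp only [A.apply_eq_sum_apply_single w, Finset.mul_sum]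
    _ ≤ ∑ i, ∑ j, ‖A‖ * ((w i)⁺ * (w j)⁺) :=
        Finset.sum_le_sum fun i _ => Finset.sum_le_sum fun j _ => hterm i j
    _ = ‖A‖ * (∑ i, (w i)⁺) ^ 2 := by
        rw [sq, Finset.sum_mul_sum, Finset.mul_sum]
        simp only [Finset.mul_sum]
    _ ≤ ‖A‖ * (Fintype.card ι * ∑ i, (w i)⁺ ^ 2) :=
        mul_le_mul_of_nonneg_left (sq_sum_le_card_mul_sum_sq ..) (norm_nonneg A)
    _ = Fintype.card ι * ‖A‖ * ∑ i, (w i)⁺ ^ 2 := by ring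

end ContinuousLinearMap

theorem sum_posPart_mul_sub_le_of_isMetzler {f : (ι → ℝ) → ι → ℝ}
    {f' : (ι → ℝ) → (ι → ℝ) →L[ℝ] (ι → ℝ)} {x y : ι → ℝ} {M : ℝ}
    (hf : ∀ z ∈ segment ℝ y x, HasFDerivAt f (f' z) z)
    (hmetzler : ∀ z ∈ segment ℝ y x, (f' z).IsMetzler)
    (hM : ∀ z ∈ segment ℝ y x, ‖f' z‖ ≤ M) :
    ∑ i, (x i - y i)⁺ * (f x i - f y i) ≤ Fintype.card ι * M * ∑ i, (x i - y i)⁺ ^ 2 := by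
  set z : ℝ → ι → ℝ := fun s => y + s • (x - y)
  have hz : ∀ s ∈ Icc (0 : ℝ) 1, z s ∈ segment ℝ y x := fun s hs =>
    segment_eq_image' ℝ y x ▸ mem_image_of_mem _ hs
  set φ : ℝ → ℝ := fun s => ∑ i, (x i - y i)⁺ * f (z s) i
  have hφ : ∀ s ∈ Icc (0 : ℝ) 1,
      HasDerivAt φ (∑ i, (x i - y i)⁺ * f' (z s) (x - y) i) s := by
    intro s hs
    have hline : HasDerivAt z (x - y) s := by
      simpa only [id, one_smul] using ((hasDerivAt_id s).smul_const (x - y)).const_add y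
    have hfz := (hf _ (hz s hs)).comp_hasDerivAt s hline
    exact HasDerivAt.fun_sum fun i _ => (hasDerivAt_pi.1 hfz i).const_mul _
  have hφ_le : ∀ s ∈ interior (Icc (0 : ℝ) 1),
      deriv φ s ≤ Fintype.card ι * M * ∑ i, (x i - y i)⁺ ^ 2 := by
    intro s hs
    have hs' := interior_subset hs
    rw [(hφ s hs').deriv]
    calc _ ≤ Fintype.card ι * ‖f' (z s)‖ * ∑ i, (x i - y i)⁺ ^ 2 :=
          (hmetzler _ (hz s hs')).sum_posPart_mul_apply_le (x - y)
      _ ≤ Fintype.card ι * M * ∑ i, (x i - y i)⁺ ^ 2 := by gcongr; exact hM _ (hz s hs')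
  have := (convex_Icc (0 : ℝ) 1).image_sub_le_mul_sub_of_deriv_le
    (fun s hs => (hφ s hs).continuousAt.continuousWithinAt)
    (fun s hs => (hφ s (interior_subset hs)).differentiableAt.differentiableWithinAt) hφ_le
    0 (left_mem_Icc.2 zero_le_one) 1 (right_mem_Icc.2 zero_le_one) zero_le_one
  simpa [φ, z, mul_sub] using this

end Metzler

theorem cooperative_system_order_preservation_general {n : ℕ}
    (D : Set (Fin n → ℝ)) (hDopen : IsOpen D) (hDconv : Convex ℝ D)
    (f : (Fin n → ℝ) → (Fin n → ℝ))
    (hf : ContDiffOn ℝ 1 f D)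
    (hMetzler : ∀ x ∈ D, ∀ i j, i ≠ j → 0 ≤ fderiv ℝ f x (Pi.single j 1) i)
    (u v : ℝ → Fin n → ℝ)
    (huv : ∀ t ≥ (0 : ℝ), ∀ i, u t i ≤ v t i)
    (x y : ℝ → Fin n → ℝ)
    (hxD : ∀ t ≥ (0 : ℝ), x t ∈ D) (hyD : ∀ t ≥ (0 : ℝ), y t ∈ D)
    (hx : ∀ t ≥ (0 : ℝ), HasDerivAt x (u t + f (x t)) t)
    (hy : ∀ t ≥ (0 : ℝ), HasDerivAt y (v t + f (y t)) t)
    (h0 : ∀ i, x 0 i ≤ y 0 i) :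
    ∀ t ≥ (0 : ℝ), ∀ i, x t i ≤ y t i := by
  intro T hT
  have hsegD : ∀ t ≥ (0 : ℝ), segment ℝ (y t) (x t) ⊆ D := fun t ht =>
    hDconv.segment_subset (hyD t ht) (hxD t ht)
  obtain ⟨M, hM⟩ := exists_forall_mem_segment_norm_le (a := 0) (b := T) hDconv
    (hf.continuousOn_fderiv_of_isOpen hDopen le_rfl)
    (fun t ht => (hx t ht.1).continuousAt.continuousWithinAt)
    (fun t ht => (hy t ht.1).continuousAt.continuousWithinAt)
    (fun t ht => hxD t ht.1) (fun t ht => hyD t ht.1)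
  set V : ℝ → ℝ := fun t => ∑ i, (x t i - y t i)⁺ ^ 2
  have hV : ∀ t ≥ (0 : ℝ), HasDerivAt V
      (∑ i, 2 * (x t i - y t i)⁺ * ((u t i + f (x t) i) - (v t i + f (y t) i))) t :=
    fun t ht => ((hx t ht).sub (hy t ht)).sum_posPart_sq
  have hV_le : ∀ t ∈ Icc 0 T,
      ∑ i, 2 * (x t i - y t i)⁺ * ((u t i + f (x t) i) - (v t i + f (y t) i))
        ≤ 2 * Fintype.card (Fin n) * M * V t := by
    intro t ht
    have hf' : ∀ z ∈ segment ℝ (y t) (x t), HasFDerivAt f (fderiv ℝ f z) z := fun z hz =>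
      ((hf.differentiableOn one_ne_zero).differentiableAt
        (hDopen.mem_nhds (hsegD t ht.1 hz))).hasFDerivAt
    calc _ ≤ 2 * ∑ i, (x t i - y t i)⁺ * (f (x t) i - f (y t) i) :=
          sum_two_mul_posPart_mul_sub_le fun i => huv t ht.1 i
      _ ≤ 2 * (Fintype.card (Fin n) * M * V t) := by
          gcongr
          exact sum_posPart_mul_sub_le_of_isMetzler hf'
            (fun z hz => hMetzler z (hsegD t ht.1 hz)) (hM t ht)
      _ = _ := by ring
  have hVT := nonpos_of_hasDerivWithinAt_le_mul
    (fun t ht => (hV t ht.1).continuousAt.continuousWithinAt)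
    (fun t ht => (hV t ht.1).hasDerivWithinAt)
    (fun t ht => hV_le t (Ico_subset_Icc_self ht))
    ((sum_posPart_sq_eq_zero_iff _).2 fun i => sub_nonpos.2 (h0 i)).le T (right_mem_Icc.2 hT)
  intro i
  exact sub_nonpos.1 ((sum_posPart_sq_eq_zero_iff _).1 (hVT.antisymm (by positivity)) i)

/-- Kamke-type order preservation. If `f` is continuously differentiable on an
open convex set `D` with Metzler Jacobian on `D`, `u(t) ≤ ũ(t)` are continuous inputs on
`[0,∞)`, and `x, x̃` are solutions of `ẋ = u(t) + f(x)`, `ẋ̃ = ũ(t) + f(x̃)` staying in `D`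
with `x(0) ≤ x̃(0)` entrywise, then `x(t) ≤ x̃(t)` entrywise for all `t ≥ 0`. -/
theorem cooperative_system_order_preservation {n : ℕ}
    (D : Set (Fin n → ℝ)) (hDopen : IsOpen D) (hDconv : Convex ℝ D)
    (f : (Fin n → ℝ) → (Fin n → ℝ))
    (hf : ContDiffOn ℝ 1 f D)
    (hMetzler : ∀ x ∈ D, ∀ i j, i ≠ j → 0 ≤ fderiv ℝ f x (Pi.single j 1) i)
    (u v : ℝ → Fin n → ℝ)
    (hucont : ContinuousOn u (Set.Ici 0)) (hvcont : ContinuousOn v (Set.Ici 0))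
    (huv : ∀ t ≥ (0 : ℝ), ∀ i, u t i ≤ v t i)
    (x y : ℝ → Fin n → ℝ)
    (hxD : ∀ t ≥ (0 : ℝ), x t ∈ D) (hyD : ∀ t ≥ (0 : ℝ), y t ∈ D)
    (hx : ∀ t ≥ (0 : ℝ), HasDerivAt x (u t + f (x t)) t)
    (hy : ∀ t ≥ (0 : ℝ), HasDerivAt y (v t + f (y t)) t)
    (h0 : ∀ i, x 0 i ≤ y 0 i) :
    ∀ t ≥ (0 : ℝ), ∀ i, x t i ≤ y t i :=
  cooperative_system_order_preservation_general D hDopen hDconv f hf hMetzler u v huv x y hxD hyD hx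
    hy h0
end

section
/- Let f : ℝⁿ → ℝⁿ be continuously differentiable on an open set containing the nonnegative orthant ℝⁿ₊, with a Metzler Jacobian there, i.e., ∂f_i/∂x_j(x) ≥ 0 for all i ≠ j. Let u ∈ ℝⁿ₊ be constant, and let x : [0,∞) → ℝⁿ be a differentiable solution of ẋ(t) = u + f(x(t)) with x(0) = 0 and x(t) ∈ ℝⁿ₊ for all t ≥ 0. Then x is entrywise monotonically non-decreasing in time: 0 ≤ s ≤ t implies x(s) ≤ x(t) entrywise. -/
/-!
Differentiating the equation, `v = ẋ = u + f ∘ x` solves the linear system `v' = A(t) v` with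
`A(t) = Df(x(t))` Metzler, and `v(0) ≥ 0` because `x` starts at `0` and stays in the orthant.
A Metzler system leaves the orthant forward invariant: if `‖A(t)‖ ≤ M`, then for every `ε > 0` the
perturbation `v + ε e^{(M+1)t} 𝟙` has a strictly positive derivative in each coordinate where it
touches zero, so it never leaves the orthant. Letting `ε → 0` gives `v ≥ 0`, so `x` is
non-decreasing.
-/

open Set Filter Topology

theorem HasDerivWithinAt.tendsto_slope_nhdsGT {g : ℝ → ℝ} {d t : ℝ}
    (hg : HasDerivWithinAt g d (Ici t) t) : Tendsto (slope g t) (𝓝[>] t) (𝓝 d) :=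
  (hasDerivWithinAt_iff_tendsto_slope' (lt_irrefl t)).1 hg.Ioi_of_Ici

theorem IsMinOn.hasDerivWithinAt_Ici_nonneg {g : ℝ → ℝ} {d a : ℝ} (hmin : IsMinOn g (Ici a) a)
    (hg : HasDerivWithinAt g d (Ici a) a) : 0 ≤ d := by
  refine ge_of_tendsto hg.tendsto_slope_nhdsGT ?_
  filter_upwards [self_mem_nhdsWithin] with s (hs : a < s)
  exact (slope_nonneg_iff_of_le hs.le).2 (hmin hs.le)

theorem HasDerivWithinAt.eventually_gt_of_pos {g : ℝ → ℝ} {d t : ℝ}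
    (hg : HasDerivWithinAt g d (Ici t) t) (hd : 0 < d) : ∀ᶠ s in 𝓝[>] t, g t < g s := by
  filter_upwards [hg.tendsto_slope_nhdsGT.eventually (lt_mem_nhds hd), self_mem_nhdsWithin]
    with s hslope (hs : t < s)
  exact (slope_pos_iff_of_le hs.le).1 hslope

theorem monotoneOn_pi_of_hasDerivAt_nonneg {ι : Type*} {x x' : ℝ → ι → ℝ} {D : Set ℝ}
    (hD : Convex ℝ D) (hx : ∀ t ∈ D, HasDerivAt x (x' t) t) (hx' : ∀ t ∈ D, 0 ≤ x' t) :
    MonotoneOn x D := by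
  intro s hs t ht hst i
  have hxi : ∀ t ∈ D, HasDerivAt (fun r => x r i) (x' t i) t := fun t ht =>
    hasDerivAt_pi.1 (hx t ht) i
  exact monotoneOn_of_hasDerivWithinAt_nonneg hD
    (fun t ht => (hxi t ht).continuousAt.continuousWithinAt)
    (fun t ht => (hxi t (interior_subset ht)).hasDerivWithinAt)
    (fun t ht => hx' t (interior_subset ht) i) hs ht hst

theorem nonneg_on_Icc_of_hasDerivWithinAt_pos_of_eq_zero {ι : Type*} [Finite ι]
    {w : ℝ → ι → ℝ} {a b : ℝ} (hw : ContinuousOn w (Icc a b)) (ha : 0 ≤ w a)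
    (hzero : ∀ t ∈ Ico a b, 0 ≤ w t → ∀ j, w t j = 0 →
      ∃ d > 0, HasDerivWithinAt (fun s => w s j) d (Ici t) t) :
    ∀ t ∈ Icc a b, 0 ≤ w t := by
  have hclosed : IsClosed ({t | 0 ≤ w t} ∩ Icc a b) := by
    rw [inter_comm]
    exact hw.preimage_isClosed_of_isClosed isClosed_Icc isClosed_Ici
  refine fun t ht => hclosed.Icc_subset_of_forall_mem_nhdsWithin ha ?_ ht
  rintro t ⟨hwt, htab⟩
  suffices ∀ j, ∀ᶠ s in 𝓝[>] t, 0 ≤ w s j from eventually_all.2 this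
  intro j
  rcases (hwt j).eq_or_lt with hwtj | hwtj
  · obtain ⟨d, hd, hder⟩ := hzero t htab hwt j hwtj.symm
    filter_upwards [hder.eventually_gt_of_pos hd] with s hs
    exact (hwtj.trans_lt hs).le
  · have hcont := continuousWithinAt_pi.1 (hw t (Ico_subset_Icc_self htab)) j
    filter_upwards [nhdsWithin_le_of_mem (Icc_mem_nhdsGT_of_mem htab)
      (hcont.eventually (lt_mem_nhds hwtj))] with s hs
    exact hs.le

section Metzler

variable {ι : Type*} [Fintype ι]

theorem apply_one_le_norm (L : (ι → ℝ) →L[ℝ] (ι → ℝ)) (j : ι) : L 1 j ≤ ‖L‖ :=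
  calc L 1 j ≤ ‖L 1‖ := (le_abs_self _).trans (norm_le_pi_norm (L 1) j)
    _ ≤ ‖L‖ := L.unit_le_opNorm 1 ((pi_norm_const_le (1 : ℝ)).trans norm_one.le)

variable [DecidableEq ι]

theorem apply_nonneg_of_metzler (L : (ι → ℝ) →ₗ[ℝ] (ι → ℝ))
    (hL : ∀ i j, i ≠ j → 0 ≤ L (Pi.single j 1) i) {w : ι → ℝ} (hw : 0 ≤ w) {j : ι}
    (hwj : w j = 0) : 0 ≤ L w j := by
  rw [pi_eq_sum_univ' w, map_sum, Finset.sum_apply]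
  refine Finset.sum_nonneg fun k _ => ?_
  rw [map_smul, Pi.smul_apply, smul_eq_mul]
  rcases eq_or_ne j k with rfl | hjk
  · simp [hwj]
  · exact mul_nonneg (hw k) (hL j k hjk)

theorem nonneg_on_Icc_of_hasDerivWithinAt_metzler {A : ℝ → (ι → ℝ) →L[ℝ] (ι → ℝ)}
    {v : ℝ → ι → ℝ} {a b M : ℝ}
    (hA : ∀ t ∈ Ico a b, ∀ i j, i ≠ j → 0 ≤ A t (Pi.single j 1) i)
    (hM : ∀ t ∈ Ico a b, ‖A t‖ ≤ M) (hv : ContinuousOn v (Icc a b))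
    (hv' : ∀ t ∈ Ico a b, HasDerivWithinAt v (A t (v t)) (Ici t) t) (ha : 0 ≤ v a) :
    ∀ t ∈ Icc a b, 0 ≤ v t := by
  have hpert : ∀ ε > 0, ∀ t ∈ Icc a b, 0 ≤ v t + (ε * Real.exp ((M + 1) * t)) • 1 := by
    intro ε hε
    refine nonneg_on_Icc_of_hasDerivWithinAt_pos_of_eq_zero (by fun_prop)
      (add_nonneg ha (smul_nonneg (by positivity) zero_le_one)) ?_
    intro t ht hwt j hwtj
    set E := ε * Real.exp ((M + 1) * t)
    have hE : 0 < E := by positivity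
    have hexp : HasDerivAt (fun s => ((ε * Real.exp ((M + 1) * s)) • (1 : ι → ℝ)) j)
        (E * (M + 1)) t := by
      simpa [E, mul_assoc] using ((hasDerivAt_id t).const_mul (M + 1)).exp.const_mul ε
    refine ⟨A t (v t) j + E * (M + 1), ?_, (hasDerivWithinAt_pi.1 (hv' t ht) j).add
      hexp.hasDerivWithinAt⟩
    have hmetz : 0 ≤ A t (v t + E • 1) j :=
      apply_nonneg_of_metzler (A t).toLinearMap (hA t ht) hwt hwtj
    have hrow : A t 1 j ≤ M := (apply_one_le_norm _ _).trans (hM t ht)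
    have hvw : v t = (v t + E • 1) - E • 1 := by abel
    rw [hvw, map_sub, map_smul]
    simp only [Pi.sub_apply, Pi.smul_apply, smul_eq_mul]
    nlinarith [mul_le_mul_of_nonneg_left hrow hE.le]
  intro t ht j
  refine le_of_forall_pos_le_add fun δ hδ => ?_
  have hexp_pos := Real.exp_pos ((M + 1) * t)
  simpa [div_mul_cancel₀ δ hexp_pos.ne'] using
    hpert (δ / Real.exp ((M + 1) * t)) (by positivity) t ht j

end Metzler

theorem monotone_flow_trajectory_from_zero_nondecreasing_general {n : ℕ}
    (U : Set (Fin n → ℝ)) (hUopen : IsOpen U)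
    (hUsub : {x : Fin n → ℝ | ∀ i, 0 ≤ x i} ⊆ U)
    (f : (Fin n → ℝ) → (Fin n → ℝ))
    (hf : ContDiffOn ℝ 1 f U)
    (hMetzler : ∀ x ∈ U, ∀ i j, i ≠ j → 0 ≤ fderiv ℝ f x (Pi.single j 1) i)
    (u : Fin n → ℝ)
    (x : ℝ → Fin n → ℝ)
    (hode : ∀ t ≥ (0 : ℝ), HasDerivAt x (u + f (x t)) t)
    (hx0 : x 0 = 0)
    (hxnn : ∀ t ≥ (0 : ℝ), ∀ i, 0 ≤ x t i) :
    ∀ s t : ℝ, 0 ≤ s → s ≤ t → ∀ i, x s i ≤ x t i := by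
  have hxU : ∀ t ≥ (0 : ℝ), x t ∈ U := fun t ht => hUsub (hxnn t ht)
  set v : ℝ → Fin n → ℝ := fun t => u + f (x t)
  have hv : ∀ t ≥ (0 : ℝ), HasDerivAt v (fderiv ℝ f (x t) (v t)) t := fun t ht =>
    ((hf.differentiableOn_one.differentiableAt (hUopen.mem_nhds (hxU t ht))).hasFDerivAt
      |>.comp_hasDerivAt t (hode t ht)).const_add u
  have hv0 : 0 ≤ v 0 := fun i =>
    IsMinOn.hasDerivWithinAt_Ici_nonneg (fun t ht => by simpa [hx0] using hxnn t ht i)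
      (hasDerivAt_pi.1 (hode 0 le_rfl) i).hasDerivWithinAt
  have hvnn : ∀ T ≥ (0 : ℝ), 0 ≤ v T := by
    intro T hT
    have hAcont : ContinuousOn (fun t => fderiv ℝ f (x t)) (Icc 0 T) :=
      (hf.continuousOn_fderiv_of_isOpen hUopen le_rfl).comp
        (fun t ht => (hode t ht.1).continuousAt.continuousWithinAt) (fun t ht => hxU t ht.1)
    obtain ⟨M, hM⟩ := isCompact_Icc.exists_bound_of_continuousOn hAcont
    exact nonneg_on_Icc_of_hasDerivWithinAt_metzler (fun t ht => hMetzler _ (hxU t ht.1))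
      (fun t ht => hM t (Ico_subset_Icc_self ht))
      (fun t ht => (hv t ht.1).continuousAt.continuousWithinAt)
      (fun t ht => (hv t ht.1).hasDerivWithinAt) hv0 T (right_mem_Icc.2 hT)
  intro s t hs hst i
  exact monotoneOn_pi_of_hasDerivAt_nonneg (convex_Ici 0) hode hvnn hs (hs.trans hst) hst i

/-- If `f` is continuously differentiable, with Metzler Jacobian, on an open set
`U` containing the nonnegative orthant, `u ≥ 0` is a constant inflow, and `x` is a solution of
`ẋ = u + f(x)` with `x(0) = 0` that stays in the orthant, then `x` is entrywise monotonically
non-decreasing in time. -/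
theorem monotone_flow_trajectory_from_zero_nondecreasing {n : ℕ}
    (U : Set (Fin n → ℝ)) (hUopen : IsOpen U)
    (hUsub : {x : Fin n → ℝ | ∀ i, 0 ≤ x i} ⊆ U)
    (f : (Fin n → ℝ) → (Fin n → ℝ))
    (hf : ContDiffOn ℝ 1 f U)
    (hMetzler : ∀ x ∈ U, ∀ i j, i ≠ j → 0 ≤ fderiv ℝ f x (Pi.single j 1) i)
    (u : Fin n → ℝ) (hu : ∀ i, 0 ≤ u i)
    (x : ℝ → Fin n → ℝ)
    (hode : ∀ t ≥ (0 : ℝ), HasDerivAt x (u + f (x t)) t)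
    (hx0 : x 0 = 0)
    (hxnn : ∀ t ≥ (0 : ℝ), ∀ i, 0 ≤ x t i) :
    ∀ s t : ℝ, 0 ≤ s → s ≤ t → ∀ i, x s i ≤ x t i :=
  monotone_flow_trajectory_from_zero_nondecreasing_general U hUopen hUsub f hf hMetzler u x hode hx0
    hxnn
end

section
/- Let f : ℝⁿ → ℝⁿ be continuously differentiable on an open set containing the nonnegative orthant ℝⁿ₊, with a Metzler Jacobian there, i.e., ∂f_i/∂x_j(x) ≥ 0 for all i ≠ j. Let u ∈ ℝⁿ₊ be constant. Let x, x̃ : [0,∞) → ℝⁿ₊ be differentiable solutions of ẋ = u + f(x), where x(0) = 0 and x̃(0) ∈ ℝⁿ₊ is arbitrary. Then x̃(t) ≥ x(t) entrywise for all t ≥ 0; in particular, if the solution started at 0 is unbounded in time, then every solution remaining in ℝⁿ₊ is unbounded in time. -/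
/-! Let `d = y - x`, so `d 0 ≥ 0`. On `[0, T]` both solutions stay in a compact convex part of the
orthant on which `‖Df‖ ≤ C`. By the mean value theorem, whenever the smallest entry `d i = -m` of
`d` is negative, `d' i ≥ -C m`: the Metzler off-diagonal entries only push `d i` up, since every
other entry of `d` is at least `-m`. Hence `d + ε e^{(C+1)t}` never reaches zero, and `ε → 0`
gives `x ≤ y`. In the sup norm `0 ≤ x ≤ y` forces `‖x‖ ≤ ‖y‖`, which transfers unboundedness. -/

open Set Filter Topology

lemma HasDerivAt.nonpos_of_eventually_le_left {g : ℝ → ℝ} {d t : ℝ} (hd : HasDerivAt g d t)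
    (hmin : ∀ᶠ s in 𝓝[<] t, g t ≤ g s) : d ≤ 0 := by
  have hslope : Tendsto (slope g t) (𝓝[<] t) (𝓝 d) :=
    (hasDerivAt_iff_tendsto_slope.1 hd).mono_left (nhdsWithin_mono _ fun s hs => ne_of_lt hs)
  refine le_of_tendsto hslope ?_
  filter_upwards [hmin, self_mem_nhdsWithin] with s hs hst
  rw [slope_def_field]
  exact div_nonpos_of_nonneg_of_nonpos (sub_nonneg.2 hs) (sub_nonpos.2 (le_of_lt hst))

lemma forall_pos_of_deriv_pos_at_first_zero {ι : Type*} [Finite ι] {φ φ' : ι → ℝ → ℝ} {T : ℝ}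
    (hφ : ∀ i, ∀ t ∈ Icc 0 T, HasDerivAt (φ i) (φ' i t) t)
    (h0 : ∀ i, 0 < φ i 0)
    (hzero : ∀ t ∈ Ioc 0 T, ∀ i, (∀ j, 0 ≤ φ j t) → φ i t = 0 → 0 < φ' i t) :
    ∀ t ∈ Icc 0 T, ∀ i, 0 < φ i t := by
  by_contra! hneg
  set S := {t ∈ Icc 0 T | ∃ i, φ i t ≤ 0}
  have hS_closed : IsClosed S := by
    have hS : S = ⋃ i, Icc 0 T ∩ φ i ⁻¹' Iic 0 := by ext; simp [S]
    rw [hS]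
    exact isClosed_iUnion_of_finite fun i =>
      ContinuousOn.preimage_isClosed_of_isClosed
        (fun t ht => (hφ i t ht).continuousAt.continuousWithinAt) isClosed_Icc isClosed_Iic
  have hS_bdd : BddBelow S := ⟨0, fun t ht => ht.1.1⟩
  obtain ⟨t, ht, i, hi⟩ := hneg
  obtain ⟨ht₀, i, hi⟩ : sInf S ∈ S := hS_closed.csInf_mem ⟨t, ht, i, hi⟩ hS_bdd
  set t₀ := sInf S
  have ht₀_pos : 0 < t₀ := ht₀.1.lt_of_ne fun h => (h0 i).not_ge (h ▸ hi)
  have hbefore : ∀ j, ∀ᶠ s in 𝓝[<] t₀, 0 < φ j s := by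
    intro j
    filter_upwards [Ioo_mem_nhdsLT ht₀_pos] with s hs
    by_contra! hle
    exact (csInf_le hS_bdd ⟨⟨hs.1.le, hs.2.le.trans ht₀.2⟩, j, hle⟩).not_gt hs.2
  have hnonneg : ∀ j, 0 ≤ φ j t₀ := fun j =>
    ge_of_tendsto ((hφ j t₀ ht₀).continuousAt.continuousWithinAt.tendsto)
      ((hbefore j).mono fun _ => le_of_lt)
  have hi0 : φ i t₀ = 0 := le_antisymm hi (hnonneg i)
  have hderiv : φ' i t₀ ≤ 0 := (hφ i t₀ ht₀).nonpos_of_eventually_le_left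
    ((hbefore i).mono fun s hs => hi0 ▸ hs.le)
  exact hderiv.not_gt (hzero t₀ ⟨ht₀_pos, ht₀.2⟩ i hnonneg hi0)

lemma nonneg_of_deriv_ge_at_min_entry {ι : Type*} [Finite ι] {d d' : ℝ → ι → ℝ} {T K : ℝ}
    (hd : ∀ t ∈ Icc 0 T, HasDerivAt d (d' t) t)
    (h0 : 0 ≤ d 0)
    (hK : ∀ t ∈ Icc 0 T, ∀ m > 0, ∀ i, (∀ j, -m ≤ d t j) → d t i = -m → -(K * m) ≤ d' t i) :
    ∀ t ∈ Icc 0 T, 0 ≤ d t := by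
  intro t ht i
  -- compare with the strict barrier `-ε e^{(K+1)t}`, then let `ε → 0`
  have hpos : ∀ ε > 0, 0 < d t i + ε * Real.exp ((K + 1) * t) := by
    intro ε hε
    have hbarrier : ∀ s, HasDerivAt (fun s => ε * Real.exp ((K + 1) * s))
        (ε * Real.exp ((K + 1) * s) * (K + 1)) s := fun s => by
      simpa [mul_comm, mul_left_comm, mul_assoc] using
        (((hasDerivAt_id s).const_mul (K + 1)).exp).const_mul ε
    refine forall_pos_of_deriv_pos_at_first_zero
      (φ := fun j s => d s j + ε * Real.exp ((K + 1) * s))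
      (fun j s hs => (hasDerivAt_pi.1 (hd s hs) j).add (hbarrier s)) ?_ ?_ t ht i
    · intro j
      simpa using add_pos_of_nonneg_of_pos (h0 j) hε
    · intro s hs j hnonneg hzero
      have hm : 0 < ε * Real.exp ((K + 1) * s) := by positivity
      have := hK s (Ioc_subset_Icc_self hs) _ hm j (fun k => by linarith [hnonneg k])
        (by linarith)
      linarith
  refine le_of_forall_pos_lt_add fun δ hδ => ?_
  have := hpos (δ / Real.exp ((K + 1) * t)) (by positivity)
  rw [div_mul_cancel₀ _ (Real.exp_pos _).ne'] at this
  simpa using this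

section Metzler

variable {ι : Type*} [Fintype ι] [DecidableEq ι]

lemma LinearMap.apply_nonneg_of_offDiag_nonneg {R : Type*} [CommRing R] [PartialOrder R]
    [IsOrderedRing R] (L : (ι → R) →ₗ[R] (ι → R)) {i : ι}
    (hL : ∀ j, j ≠ i → 0 ≤ L (Pi.single j 1) i) {w : ι → R} (hw : 0 ≤ w) (hwi : w i = 0) :
    0 ≤ L w i := by
  rw [← L.toMatrix'_mulVec]
  refine Finset.sum_nonneg fun j _ => ?_
  rcases eq_or_ne j i with rfl | hji
  · simp [hwi]
  · exact mul_nonneg (hL j hji) (hw j)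

lemma ContinuousLinearMap.neg_mul_opNorm_le_apply_of_offDiag_nonneg
    (L : (ι → ℝ) →L[ℝ] (ι → ℝ)) {i : ι} (hL : ∀ j, j ≠ i → 0 ≤ L (Pi.single j 1) i)
    {v : ι → ℝ} {m : ℝ} (hm : 0 ≤ m) (hv : ∀ j, -m ≤ v j) (hvi : v i = -m) :
    -(m * ‖L‖) ≤ L v i := by
  set c : ι → ℝ := fun _ => m
  have hface : 0 ≤ L (v + c) i :=
    L.toLinearMap.apply_nonneg_of_offDiag_nonneg hL (fun j => show 0 ≤ v j + m by linarith [hv j])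
      (by simp [c, hvi])
  have hc : L c i ≤ m * ‖L‖ :=
    calc L c i ≤ ‖L c‖ := (le_abs_self _).trans (norm_le_pi_norm (L c) i)
      _ ≤ ‖L‖ * ‖c‖ := L.le_opNorm c
      _ ≤ ‖L‖ * m := by
        gcongr
        exact (pi_norm_le_iff_of_nonneg hm).2 fun _ => by simp [c, abs_of_nonneg hm]
      _ = m * ‖L‖ := mul_comm _ _
  have : L v i = L (v + c) i - L c i := by simp
  linarith

lemma apply_sub_apply_ge_of_fderiv_offDiag_nonneg {f : (ι → ℝ) → (ι → ℝ)} {S : Set (ι → ℝ)}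
    (hS : Convex ℝ S) (hf : ∀ z ∈ S, DifferentiableAt ℝ f z) {i : ι}
    (hMetzler : ∀ z ∈ S, ∀ j, j ≠ i → 0 ≤ fderiv ℝ f z (Pi.single j 1) i)
    {C : ℝ} (hC : ∀ z ∈ S, ‖fderiv ℝ f z‖ ≤ C) {a b : ι → ℝ} (ha : a ∈ S) (hb : b ∈ S)
    {m : ℝ} (hm : 0 ≤ m) (hba : ∀ j, -m ≤ b j - a j) (hbai : b i - a i = -m) :
    -(C * m) ≤ f b i - f a i := by
  obtain ⟨z, hz, hmvt⟩ := domain_mvt (f := fun z => f z i)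
    (fun z hz => (hasFDerivAt_pi'.1 (hf z hz).hasFDerivAt i).hasFDerivWithinAt) hS ha hb
  have hzS : z ∈ S := hS.segment_subset ha hb hz
  calc -(C * m) ≤ -(m * ‖fderiv ℝ f z‖) := by nlinarith [hC z hzS]
    _ ≤ fderiv ℝ f z (b - a) i :=
      (fderiv ℝ f z).neg_mul_opNorm_le_apply_of_offDiag_nonneg (hMetzler z hzS) hm
        (by simpa using hba) (by simpa using hbai)
    _ = f b i - f a i := hmvt.symm

lemma le_of_hasDerivAt_of_fderiv_offDiag_nonneg {f : (ι → ℝ) → (ι → ℝ)} {S : Set (ι → ℝ)}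
    (hS : Convex ℝ S) (hf : ∀ z ∈ S, DifferentiableAt ℝ f z)
    (hMetzler : ∀ z ∈ S, ∀ i j, i ≠ j → 0 ≤ fderiv ℝ f z (Pi.single j 1) i)
    {C : ℝ} (hC : ∀ z ∈ S, ‖fderiv ℝ f z‖ ≤ C) {x y : ℝ → ι → ℝ} {T : ℝ}
    (hx : ∀ t ∈ Icc 0 T, HasDerivAt x (f (x t)) t) (hy : ∀ t ∈ Icc 0 T, HasDerivAt y (f (y t)) t)
    (hxS : ∀ t ∈ Icc 0 T, x t ∈ S) (hyS : ∀ t ∈ Icc 0 T, y t ∈ S) (h0 : x 0 ≤ y 0) :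
    ∀ t ∈ Icc 0 T, x t ≤ y t := fun t ht =>
  sub_nonneg.1 <| nonneg_of_deriv_ge_at_min_entry (d := y - x) (K := C)
    (fun s hs => (hy s hs).sub (hx s hs)) (sub_nonneg.2 h0)
    (fun s hs _ hm i hmin hi => apply_sub_apply_ge_of_fderiv_offDiag_nonneg hS hf
      (fun z hz j hj => hMetzler z hz i j hj.symm) hC (hxS s hs) (hyS s hs) hm.le hmin hi) t ht

end Metzler

lemma Pi.norm_le_norm_of_nonneg_of_le {ι : Type*} [Fintype ι] {a b : ι → ℝ} (ha : 0 ≤ a)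
    (hab : a ≤ b) : ‖a‖ ≤ ‖b‖ :=
  (pi_norm_le_iff_of_nonneg (norm_nonneg b)).2 fun i => by
    rw [Real.norm_of_nonneg (ha i)]
    exact (hab i).trans ((le_abs_self _).trans (norm_le_pi_norm b i))

theorem monotone_flow_zero_solution_dominated_general {n : ℕ}
    (U : Set (Fin n → ℝ)) (hUopen : IsOpen U)
    (hUsub : {x : Fin n → ℝ | ∀ i, 0 ≤ x i} ⊆ U)
    (f : (Fin n → ℝ) → (Fin n → ℝ))
    (hf : ContDiffOn ℝ 1 f U)
    (hMetzler : ∀ x ∈ U, ∀ i j, i ≠ j → 0 ≤ fderiv ℝ f x (Pi.single j 1) i)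
    (u : Fin n → ℝ)
    (x y : ℝ → Fin n → ℝ)
    (hxode : ∀ t ≥ (0 : ℝ), HasDerivAt x (u + f (x t)) t)
    (hyode : ∀ t ≥ (0 : ℝ), HasDerivAt y (u + f (y t)) t)
    (hx0 : x 0 = 0)
    (hxnn : ∀ t ≥ (0 : ℝ), ∀ i, 0 ≤ x t i)
    (hynn : ∀ t ≥ (0 : ℝ), ∀ i, 0 ≤ y t i) :
    (∀ t ≥ (0 : ℝ), ∀ i, x t i ≤ y t i) ∧
    ((¬ ∃ M : ℝ, ∀ t ≥ (0 : ℝ), ‖x t‖ ≤ M) → ¬ ∃ M : ℝ, ∀ t ≥ (0 : ℝ), ‖y t‖ ≤ M) := by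
  have hxy : ∀ t ≥ (0 : ℝ), x t ≤ y t := by
    intro T hT
    have hbdd : ∀ z : ℝ → Fin n → ℝ, (∀ t ≥ 0, HasDerivAt z (u + f (z t)) t) →
        ∃ R, ∀ t ∈ Icc 0 T, ‖z t‖ ≤ R := fun z hz =>
      isCompact_Icc.exists_bound_of_continuousOn
        fun t ht => (hz t ht.1).continuousAt.continuousWithinAt
    obtain ⟨⟨Rx, hRx⟩, ⟨Ry, hRy⟩⟩ := And.intro (hbdd x hxode) (hbdd y hyode)
    set S : Set (Fin n → ℝ) := Ici 0 ∩ Metric.closedBall 0 (max Rx Ry)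
    have hSU : S ⊆ U := fun z hz => hUsub hz.1
    have hS_compact : IsCompact S := (isCompact_closedBall 0 _).inter_left isClosed_Ici
    obtain ⟨C, hC⟩ := hS_compact.exists_bound_of_continuousOn
      ((hf.continuousOn_fderiv_of_isOpen hUopen le_rfl).mono hSU)
    refine le_of_hasDerivAt_of_fderiv_offDiag_nonneg (f := fun z => u + f z) (S := S)
      ((convex_Ici 0).inter (convex_closedBall 0 _))
      (fun z hz => ((hf.differentiableOn one_ne_zero).differentiableAt
        (hUopen.mem_nhds (hSU hz))).const_add u)
      (fun z hz => by rw [fderiv_const_add]; exact hMetzler z (hSU hz))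
      (fun z hz => by rw [fderiv_const_add]; exact hC z hz)
      (fun t ht => hxode t ht.1) (fun t ht => hyode t ht.1)
      (fun t ht => ⟨hxnn t ht.1, mem_closedBall_zero_iff.2 (le_max_of_le_left (hRx t ht))⟩)
      (fun t ht => ⟨hynn t ht.1, mem_closedBall_zero_iff.2 (le_max_of_le_right (hRy t ht))⟩)
      (hx0 ▸ fun i => hynn 0 le_rfl i) T ⟨hT, le_rfl⟩
  refine ⟨hxy, fun hx_unbdd ⟨M, hM⟩ => hx_unbdd ⟨M, fun t ht => ?_⟩⟩
  exact (Pi.norm_le_norm_of_nonneg_of_le (hxnn t ht) (hxy t ht)).trans (hM t ht)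

/-- If `f` is continuously differentiable, with Metzler Jacobian, on an open set
`U` containing the nonnegative orthant, `u ≥ 0` is a constant inflow, and `x, x̃` are solutions
of `ẋ = u + f(x)` staying in the orthant with `x(0) = 0` and `x̃(0) ≥ 0` arbitrary, then
`x̃(t) ≥ x(t)` entrywise for all `t ≥ 0`; in particular, if the solution started at `0` is
unbounded in time, then so is `x̃`. -/
theorem monotone_flow_zero_solution_dominated {n : ℕ}
    (U : Set (Fin n → ℝ)) (hUopen : IsOpen U)
    (hUsub : {x : Fin n → ℝ | ∀ i, 0 ≤ x i} ⊆ U)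
    (f : (Fin n → ℝ) → (Fin n → ℝ))
    (hf : ContDiffOn ℝ 1 f U)
    (hMetzler : ∀ x ∈ U, ∀ i j, i ≠ j → 0 ≤ fderiv ℝ f x (Pi.single j 1) i)
    (u : Fin n → ℝ) (hu : ∀ i, 0 ≤ u i)
    (x y : ℝ → Fin n → ℝ)
    (hxode : ∀ t ≥ (0 : ℝ), HasDerivAt x (u + f (x t)) t)
    (hyode : ∀ t ≥ (0 : ℝ), HasDerivAt y (u + f (y t)) t)
    (hx0 : x 0 = 0)
    (hxnn : ∀ t ≥ (0 : ℝ), ∀ i, 0 ≤ x t i)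
    (hynn : ∀ t ≥ (0 : ℝ), ∀ i, 0 ≤ y t i) :
    (∀ t ≥ (0 : ℝ), ∀ i, x t i ≤ y t i) ∧
    ((¬ ∃ M : ℝ, ∀ t ≥ (0 : ℝ), ‖x t‖ ≤ M) → ¬ ∃ M : ℝ, ∀ t ≥ (0 : ℝ), ‖y t‖ ≤ M) :=
  monotone_flow_zero_solution_dominated_general U hUopen hUsub f hf hMetzler u x y hxode hyode hx0
    hxnn hynn
end
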